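/- arXiv:1511.08970 — 10 statements merged into one kernel-verified Lean document; each statement's English description precedes it below -/
import Mathlib

section
/- A vector x ∈ ℝ^N minimizes F if and only if for every k ∈ {1,…,N} the following component-wise conditions hold: if x_k ≠ 0 then (Aᵀ(b − Ax))_k = λ_k · sgn(x_k) · q_k · |x_k|^{q_k − 1}; if x_k = 0 and q_k > 1 then (Aᵀ(b − Ax))_k = 0; and if x_k = 0 and q_k = 1 then |(Aᵀ(b − Ax))_k| ≤ λ_k. -/
open Finset Filter Matrix Topology

/-!
With `r = Aᵀ(b - Ax)` and `φₖ = λₖ|·|^{qₖ}`, expanding the square gives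
`F(y) - F(x) = ‖A(y - x)‖² + 2 ∑ₖ (φₖ(yₖ) - φₖ(xₖ) - rₖ(yₖ - xₖ))`.
Hence `x` minimizes `F` iff every `rₖ` is a subgradient of `φₖ` at `xₖ`: sufficiency is
immediate, and moving only the `k`-th coordinate gives the subgradient inequality up to an error
quadratic in the step, which convexity of `φₖ` removes. The subgradients of `λ|·|^q` are its
derivative where it is differentiable (`xₖ ≠ 0`, or `q > 1`) and `[-λ, λ]` at `0` when `q = 1`.
-/

/-- Squared Euclidean residual plus generalized sparsity penalty:
`F(x) = ‖Ax - b‖₂² + 2 ∑ₖ λₖ |xₖ|^{qₖ}`. -/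
noncomputable def Ffun {M N : ℕ} (A : Matrix (Fin M) (Fin N) ℝ) (b : Fin M → ℝ)
    (lam q : Fin N → ℝ) (x : Fin N → ℝ) : ℝ :=
  (∑ i, (A.mulVec x i - b i) ^ 2) + 2 * ∑ k, lam k * |x k| ^ (q k)

/-- The surrogate functional `G(x,a,w,ε)`. -/
noncomputable def Gfun {M N : ℕ} (A : Matrix (Fin M) (Fin N) ℝ) (b : Fin M → ℝ)
    (lam q : Fin N → ℝ) (x a w : Fin N → ℝ) (ε : ℝ) : ℝ :=
  (∑ i, (A.mulVec x i - b i) ^ 2) - (∑ i, (A.mulVec (x - a) i) ^ 2)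
    + (∑ k, (x k - a k) ^ 2)
    + ∑ k ∈ Finset.univ.filter (fun k => 1 ≤ q k ∧ q k < 2),
        lam k * (q k * w k * ((x k) ^ 2 + ε ^ 2)
          + (2 - q k) * (w k) ^ (q k / (q k - 2)))
    + ∑ k ∈ Finset.univ.filter (fun k => q k = 2),
        2 * lam k * ((x k) ^ 2 + ε ^ 2) * ((w k) ^ 2 - 2 * w k + 2)

/-- Euclidean (ℓ²) norm on `Fin N → ℝ`. -/
noncomputable def l2 {N : ℕ} (v : Fin N → ℝ) : ℝ :=
  Real.sqrt (∑ k, (v k) ^ 2)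

/-- Spectral (ℓ² operator) norm of a matrix. -/
noncomputable def specNorm {M N : ℕ} (A : Matrix (Fin M) (Fin N) ℝ) : ℝ :=
  ‖LinearMap.toContinuousLinearMap (Matrix.toEuclideanLin A)‖

open Set

def HasSubgradientAt (f : ℝ → ℝ) (r a : ℝ) : Prop :=
  ∀ z, f a + r * (z - a) ≤ f z

theorem HasSubgradientAt.eq_of_hasDerivAt {f : ℝ → ℝ} {r a f' : ℝ}
    (h : HasSubgradientAt f r a) (hf : HasDerivAt f f' a) : r = f' := by
  have hmin : IsLocalMin (fun z => f z - r * z) a :=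
    Eventually.of_forall fun z => by have := h z; dsimp only; linarith
  have := hmin.hasDerivAt_eq_zero (hf.sub ((hasDerivAt_id a).const_mul r))
  linarith

theorem ConvexOn.hasSubgradientAt_of_hasDerivAt {f : ℝ → ℝ} {a f' : ℝ}
    (hf : ConvexOn ℝ univ f) (hd : HasDerivAt f f' a) : HasSubgradientAt f f' a := by
  intro z
  rcases lt_trichotomy z a with hz | rfl | hz
  · have := hf.slope_le_of_hasDerivAt (mem_univ z) (mem_univ a) hz hd
    rw [slope_def_field, div_le_iff₀ (by linarith)] at this
    linarith
  · simp
  · have := hf.le_slope_of_hasDerivAt (mem_univ a) (mem_univ z) hz hd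
    rw [slope_def_field, le_div_iff₀ (by linarith)] at this
    linarith

theorem ConvexOn.hasSubgradientAt_of_sq_sub_le {f : ℝ → ℝ} {r a C : ℝ}
    (hf : ConvexOn ℝ univ f) (h : ∀ z, f a + r * (z - a) - C * (z - a) ^ 2 ≤ f z) :
    HasSubgradientAt f r a := by
  intro z
  -- convexity bounds the gap at `a + s (z - a)` by `s` times the gap at `z`, while the
  -- quadratic error there is of order `s²`
  have hshrink : ∀ s ∈ Ioo (0 : ℝ) 1, -(C * (z - a) ^ 2 * s) ≤ f z - f a - r * (z - a) := by
    rintro s ⟨hs0, hs1⟩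
    have hconv := hf.2 (mem_univ a) (mem_univ z) (sub_nonneg.2 hs1.le) hs0.le (by ring)
    have hlow := h ((1 - s) • a + s • z)
    simp only [smul_eq_mul] at hconv hlow
    have : -(C * (z - a) ^ 2 * s) * s ≤ (f z - f a - r * (z - a)) * s := by nlinarith
    exact le_of_mul_le_mul_right this hs0
  have hlim : Tendsto (fun s : ℝ => -(C * (z - a) ^ 2 * s)) (𝓝[>] 0) (𝓝 0) :=
    tendsto_nhdsWithin_of_tendsto_nhds <|
      (by fun_prop : Continuous fun s : ℝ => -(C * (z - a) ^ 2 * s)).tendsto' 0 0 (by simp)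
  linarith [le_of_tendsto hlim (mem_of_superset (Ioo_mem_nhdsGT one_pos) hshrink)]

theorem convexOn_abs_rpow {p : ℝ} (hp : 1 ≤ p) : ConvexOn ℝ univ fun z : ℝ => |z| ^ p := by
  refine ⟨convex_univ, fun x _ y _ s t hs ht hst => ?_⟩
  calc |s • x + t • y| ^ p ≤ (s • |x| + t • |y|) ^ p := by
        gcongr
        simpa [abs_of_nonneg hs, abs_of_nonneg ht] using abs_add_le (s * x) (t * y)
    _ ≤ s • |x| ^ p + t • |y| ^ p :=
        (convexOn_rpow hp).2 (abs_nonneg x) (abs_nonneg y) hs ht hst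

theorem hasDerivAt_abs_rpow_of_ne_zero {a : ℝ} (ha : a ≠ 0) (p : ℝ) :
    HasDerivAt (fun z : ℝ => |z| ^ p) (Real.sign a * p * |a| ^ (p - 1)) a := by
  rcases ha.lt_or_gt with ha | ha
  · simpa [Real.sign_of_neg ha] using (hasDerivAt_abs_neg ha).rpow_const (p := p) (Or.inl (by positivity))
  · simpa [Real.sign_of_pos ha] using (hasDerivAt_abs_pos ha).rpow_const (p := p) (Or.inl (by positivity))

theorem ConvexOn.hasSubgradientAt_iff_of_hasDerivAt {f : ℝ → ℝ} {r a f' : ℝ}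
    (hf : ConvexOn ℝ univ f) (hd : HasDerivAt f f' a) : HasSubgradientAt f r a ↔ r = f' :=
  ⟨fun h => h.eq_of_hasDerivAt hd, fun h => h ▸ hf.hasSubgradientAt_of_hasDerivAt hd⟩

theorem hasSubgradientAt_zero_abs_iff {lam r : ℝ} :
    HasSubgradientAt (fun z => lam * |z|) r 0 ↔ |r| ≤ lam := by
  simp only [HasSubgradientAt, abs_zero, mul_zero, sub_zero, zero_add]
  refine ⟨fun h => abs_le.2 ⟨?_, ?_⟩, fun h z => ?_⟩
  · exact neg_le.1 (by simpa using h (-1))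
  · simpa using h 1
  · calc r * z ≤ |r| * |z| := by rw [← abs_mul]; exact le_abs_self _
      _ ≤ lam * |z| := by gcongr

theorem hasSubgradientAt_const_mul_abs_rpow_iff {lam q r a : ℝ} (hlam : 0 ≤ lam) (hq : 1 ≤ q) :
    HasSubgradientAt (fun z => lam * |z| ^ q) r a ↔
      (a ≠ 0 → r = lam * Real.sign a * q * |a| ^ (q - 1)) ∧
      (a = 0 → 1 < q → r = 0) ∧ (a = 0 → q = 1 → |r| ≤ lam) := by
  have hconv : ConvexOn ℝ univ fun z => lam * |z| ^ q := (convexOn_abs_rpow hq).smul hlam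
  rcases ne_or_eq a 0 with ha | rfl
  · have hd := (hasDerivAt_abs_rpow_of_ne_zero ha q).const_mul lam
    simp only [hconv.hasSubgradientAt_iff_of_hasDerivAt hd, ha, mul_assoc]
    tauto
  rcases hq.eq_or_lt with rfl | hq
  · simpa using hasSubgradientAt_zero_abs_iff
  · have hd : HasDerivAt (fun z => lam * |z| ^ q) 0 0 := by
      simpa using (hasDerivAt_abs_rpow 0 hq).const_mul lam
    simp [hconv.hasSubgradientAt_iff_of_hasDerivAt hd, hq, hq.ne']

theorem Function.update_sub_self {ι G : Type*} [DecidableEq ι] [AddGroup G] (x : ι → G) (k : ι)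
    (z : G) : Function.update x k z - x = Pi.single k (z - x k) := by
  ext j; rcases eq_or_ne j k with rfl | h <;> simp [*]

section
variable {m n : Type*} [Fintype m] [Fintype n]

def penalizedLeastSquares (A : Matrix m n ℝ) (b : m → ℝ) (φ : n → ℝ → ℝ) (x : n → ℝ) : ℝ :=
  (∑ i, ((A *ᵥ x) i - b i) ^ 2) + 2 * ∑ k, φ k (x k)

theorem penalizedLeastSquares_eq (A : Matrix m n ℝ) (b : m → ℝ) (φ : n → ℝ → ℝ) (x y : n → ℝ) :
    penalizedLeastSquares A b φ y = penalizedLeastSquares A b φ x + ∑ i, (A *ᵥ (y - x)) i ^ 2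
      + 2 * ∑ k, (φ k (y k) - φ k (x k) - (Aᵀ *ᵥ (b - A *ᵥ x)) k * (y k - x k)) := by
  have hcross : (A *ᵥ x - b) ⬝ᵥ (A *ᵥ (y - x)) = -((Aᵀ *ᵥ (b - A *ᵥ x)) ⬝ᵥ (y - x)) := by
    rw [dotProduct_mulVec, mulVec_transpose, ← neg_sub, neg_vecMul, neg_dotProduct]
  simp only [dotProduct, Pi.sub_apply] at hcross
  have hy : ∀ i, (A *ᵥ y) i - b i = ((A *ᵥ x) i - b i) + (A *ᵥ (y - x)) i := by
    intro i; rw [mulVec_sub, Pi.sub_apply]; ring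
  simp only [penalizedLeastSquares, hy, add_sq, Finset.sum_add_distrib, Finset.sum_sub_distrib]
  rw [show ∑ i, 2 * ((A *ᵥ x) i - b i) * (A *ᵥ (y - x)) i
      = 2 * ∑ i, ((A *ᵥ x) i - b i) * (A *ᵥ (y - x)) i by rw [Finset.mul_sum]; simp only [mul_assoc],
    hcross]
  ring

theorem forall_penalizedLeastSquares_le_iff [DecidableEq n] (A : Matrix m n ℝ) (b : m → ℝ)
    (φ : n → ℝ → ℝ) (hφ : ∀ k, ConvexOn ℝ univ (φ k)) (x : n → ℝ) :
    (∀ y, penalizedLeastSquares A b φ x ≤ penalizedLeastSquares A b φ y) ↔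
      ∀ k, HasSubgradientAt (φ k) ((Aᵀ *ᵥ (b - A *ᵥ x)) k) (x k) := by
  set r := Aᵀ *ᵥ (b - A *ᵥ x)
  constructor
  · intro hmin k
    refine (hφ k).hasSubgradientAt_of_sq_sub_le (C := (∑ i, A i k ^ 2) / 2) fun z => ?_
    have hquad : ∑ i, (A *ᵥ Pi.single k (z - x k)) i ^ 2 = (∑ i, A i k ^ 2) * (z - x k) ^ 2 := by
      simp [mulVec_single, mul_pow, Finset.sum_mul]
    have h := hmin (Function.update x k z)
    rw [penalizedLeastSquares_eq A b φ x (Function.update x k z), Function.update_sub_self, hquad,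
      Finset.sum_eq_single k (fun j _ hj => by simp [hj]) (by simp), Function.update_self] at h
    linarith
  · intro hsub y
    rw [penalizedLeastSquares_eq A b φ x y]
    have hsq : 0 ≤ ∑ i, (A *ᵥ (y - x)) i ^ 2 := Finset.sum_nonneg fun i _ => sq_nonneg _
    have hpen : 0 ≤ ∑ k, (φ k (y k) - φ k (x k) - r k * (y k - x k)) :=
      Finset.sum_nonneg fun k _ => by linarith [hsub k (y k)]
    linarith
end

theorem Ffun_eq_penalizedLeastSquares {M N : ℕ} (A : Matrix (Fin M) (Fin N) ℝ) (b : Fin M → ℝ)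
    (lam q : Fin N → ℝ) :
    Ffun A b lam q = penalizedLeastSquares A b fun k z => lam k * |z| ^ q k :=
  rfl

/-- a vector `x` minimizes `F` iff the component-wise optimality
conditions hold. -/
theorem stmt_0 {M N : ℕ} (A : Matrix (Fin M) (Fin N) ℝ) (b : Fin M → ℝ)
    (lam q : Fin N → ℝ) (hlam : ∀ k, 0 < lam k)
    (hq : ∀ k, 1 ≤ q k ∧ q k ≤ 2) (x : Fin N → ℝ) :
    (∀ y : Fin N → ℝ, Ffun A b lam q x ≤ Ffun A b lam q y) ↔
      (∀ k : Fin N,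
        (x k ≠ 0 →
          Aᵀ.mulVec (b - A.mulVec x) k
            = lam k * Real.sign (x k) * q k * |x k| ^ (q k - 1)) ∧
        (x k = 0 → 1 < q k → Aᵀ.mulVec (b - A.mulVec x) k = 0) ∧
        (x k = 0 → q k = 1 → |Aᵀ.mulVec (b - A.mulVec x) k| ≤ lam k)) := by
  have hconv : ∀ k, ConvexOn ℝ univ fun z => lam k * |z| ^ q k :=
    fun k => (convexOn_abs_rpow (hq k).1).smul (hlam k).le
  simp only [Ffun_eq_penalizedLeastSquares]
  exact (forall_penalizedLeastSquares_le_iff A b _ hconv x).trans <|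
    forall_congr' fun k => hasSubgradientAt_const_mul_abs_rpow_iff (hlam k).le (hq k).1
end

section
/- If q_k = 1 and λ_k = λ for all k, and λ > ‖Aᵀ b‖_∞ (the maximum absolute value of the entries of Aᵀ b), then the zero vector minimizes F, i.e., F(0) ≤ F(x) for all x ∈ ℝ^N. -/
open Finset Filter Matrix Topology

/-- if all `qₖ = 1`, all `λₖ = c`, and `c > ‖Aᵀb‖_∞`, then the zero
vector minimizes `F`. -/
theorem stmt_1 {M N : ℕ} (A : Matrix (Fin M) (Fin N) ℝ) (b : Fin M → ℝ)
    (lam q : Fin N → ℝ) (hlam : ∀ k, 0 < lam k)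
    (hq : ∀ k, 1 ≤ q k ∧ q k ≤ 2)
    (c : ℝ) (hq1 : ∀ k, q k = 1) (hlamc : ∀ k, lam k = c)
    (hc : (⨆ k : Fin N, |Aᵀ.mulVec b k|) < c) :
    ∀ x : Fin N → ℝ, Ffun A b lam q 0 ≤ Ffun A b lam q x := by
  intro x
  have key : ∑ i, (A.mulVec x i) * b i ≤ c * ∑ k, |x k| := by
    have h1 : ∑ i, (A.mulVec x i) * b i = ∑ k, (Aᵀ.mulVec b k) * x k := by
      have : (A.mulVec x) ⬝ᵥ b = (Aᵀ.mulVec b) ⬝ᵥ x := by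
        rw [dotProduct_comm, Matrix.dotProduct_mulVec, Matrix.mulVec_transpose]
      simpa [dotProduct] using this
    rw [h1, Finset.mul_sum]
    apply Finset.sum_le_sum
    intro k _
    calc Aᵀ.mulVec b k * x k ≤ |Aᵀ.mulVec b k * x k| := le_abs_self _
      _ = |Aᵀ.mulVec b k| * |x k| := abs_mul _ _
      _ ≤ c * |x k| := by
          apply mul_le_mul_of_nonneg_right _ (abs_nonneg _)
          exact le_trans (le_ciSup (f := fun k => |Aᵀ.mulVec b k|)
            (Set.Finite.bddAbove (Set.finite_range _)) k) hc.le
  have hu : (0:ℝ) ≤ ∑ i, (A.mulVec x i) ^ 2 :=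
    Finset.sum_nonneg fun i _ => sq_nonneg _
  have expand : ∑ i, (A.mulVec x i - b i) ^ 2
      = ∑ i, (A.mulVec x i) ^ 2 - 2 * ∑ i, A.mulVec x i * b i + ∑ i, b i ^ 2 := by
    rw [Finset.mul_sum, ← Finset.sum_sub_distrib, ← Finset.sum_add_distrib]
    exact Finset.sum_congr rfl fun i _ => by ring
  simp only [Ffun, hq1, hlamc, Real.rpow_one, Matrix.mulVec_zero, Pi.zero_apply,
    abs_zero, mul_zero, Finset.sum_const_zero, zero_sub, expand, neg_sq,
    ← Finset.mul_sum]
  linarith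
end

section
/- Fix x ∈ ℝ^N, a ∈ ℝ^N and ε > 0. Then the function w ↦ G(x, a, w, ε), restricted to vectors w with strictly positive components, attains its minimum exactly at the weight vector given by w_k = (x_k² + ε²)^{(q_k − 2)/2} for k ∈ Q₁ and w_k = 1 for k ∈ Q₂ (equivalently, w_k = (x_k² + ε²)^{(q_k − 2)/2} for all k). -/
open Finset Filter Matrix Topology

/-!
`G` is separable in `w`, so it suffices to minimise each weight term, with `s = x_k² + ε²`.
For `q < 2`, half the term `q w s + (2 - q) w^{q/(q-2)}` is the arithmetic mean of `w s` and
`w^{q/(q-2)}` with weights `q/2` and `1 - q/2`, whose geometric mean is `s^{q/2}` whatever `w` is;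
by weighted AM-GM the term is at least `2 s^{q/2}`, with equality iff `w s = w^{q/(q-2)}`, i.e.
`w = s^{(q-2)/2}`. For `q = 2` the term is a positive multiple of `(w - 1)² + 1`.
-/

noncomputable def weightPenalty (q s w : ℝ) : ℝ :=
  q * w * s + (2 - q) * w ^ (q / (q - 2))

section WeightPenalty

variable {q s w : ℝ}

lemma geom_mean_weightPenalty (hs : 0 < s) (hq : q ≠ 2) (hw : 0 < w) :
    (w * s) ^ (q / 2) * (w ^ (q / (q - 2))) ^ (1 - q / 2) = s ^ (q / 2) := by
  have hq' : q - 2 ≠ 0 := sub_ne_zero.2 hq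
  rw [Real.mul_rpow hw.le hs.le, ← Real.rpow_mul hw.le, mul_right_comm, ← Real.rpow_add hw]
  have he : q / 2 + q / (q - 2) * (1 - q / 2) = 0 := by field_simp; ring
  rw [he, Real.rpow_zero, one_mul]

lemma weightPenalty_eq_two_mul_arith_mean (q s w : ℝ) :
    weightPenalty q s w = 2 * (q / 2 * (w * s) + (1 - q / 2) * w ^ (q / (q - 2))) := by
  unfold weightPenalty; ring

lemma mul_eq_rpow_iff (hs : 0 < s) (hq : q ≠ 2) (hw : 0 < w) :
    w * s = w ^ (q / (q - 2)) ↔ w = s ^ ((q - 2) / 2) := by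
  have hq' : q - 2 ≠ 0 := sub_ne_zero.2 hq
  have hsplit : w ^ (q / (q - 2)) = w * w ^ (2 / (q - 2)) := by
    have he : q / (q - 2) = 1 + 2 / (q - 2) := by field_simp; ring
    rw [he, Real.rpow_add hw, Real.rpow_one]
  rw [hsplit, mul_right_inj' hw.ne', eq_comm,
    ← Real.rpow_inv_eq hw.le hs.le (by positivity), inv_div, eq_comm]

lemma two_mul_rpow_le_weightPenalty (hs : 0 < s) (hq0 : 0 < q) (hq2 : q < 2) (hw : 0 < w) :
    2 * s ^ (q / 2) ≤ weightPenalty q s w := by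
  have h := Real.geom_mean_le_arith_mean2_weighted (w₁ := q / 2) (w₂ := 1 - q / 2)
    (p₁ := w * s) (p₂ := w ^ (q / (q - 2))) (by positivity) (by linarith) (by positivity)
    (by positivity) (by ring)
  rw [geom_mean_weightPenalty hs hq2.ne hw] at h
  rw [weightPenalty_eq_two_mul_arith_mean]
  linarith

lemma weightPenalty_eq_iff (hs : 0 < s) (hq0 : 0 < q) (hq2 : q < 2) (hw : 0 < w) :
    weightPenalty q s w = 2 * s ^ (q / 2) ↔ w = s ^ ((q - 2) / 2) := by
  have h := Real.geom_mean_eq_arith_mean2_weighted_iff_of_pos (w₁ := q / 2) (w₂ := 1 - q / 2)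
    (p₁ := w * s) (p₂ := w ^ (q / (q - 2))) (by positivity) (by linarith) (by positivity)
    (by positivity) (by ring)
  rw [geom_mean_weightPenalty hs hq2.ne hw, mul_eq_rpow_iff hs hq2.ne hw] at h
  rw [weightPenalty_eq_two_mul_arith_mean, ← h]
  constructor <;> intro h' <;> linarith

lemma mul_weightPenalty_le {lam u : ℝ} (hlam : 0 ≤ lam) (hs : 0 < s) (hq0 : 0 < q) (hq2 : q < 2)
    (hw : 0 < w) (hu : u = s ^ ((q - 2) / 2)) :
    lam * weightPenalty q s u ≤ lam * weightPenalty q s w := by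
  refine mul_le_mul_of_nonneg_left ?_ hlam
  rw [(weightPenalty_eq_iff hs hq0 hq2 (hu ▸ Real.rpow_pos_of_pos hs _)).2 hu]
  exact two_mul_rpow_le_weightPenalty hs hq0 hq2 hw

end WeightPenalty

lemma mul_sq_sub_two_mul_add_two_le {c u : ℝ} (w : ℝ) (hc : 0 ≤ c) (hu : u = 1) :
    c * (u ^ 2 - 2 * u + 2) ≤ c * (w ^ 2 - 2 * w + 2) :=
  mul_le_mul_of_nonneg_left (by nlinarith [sq_nonneg (w - 1)]) hc

lemma sq_sub_two_mul_add_two_eq_one_iff {w : ℝ} : w ^ 2 - 2 * w + 2 = 1 ↔ w = 1 := by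
  rw [← sub_eq_zero (a := w), ← sq_eq_zero_iff]
  constructor <;> intro h <;> linarith

section Blocks

variable {ι : Type*} {t : Finset ι} {c lam q s u w : ι → ℝ}

lemma sum_mul_weightPenalty_le (hlam : ∀ k ∈ t, 0 ≤ lam k)
    (hq : ∀ k ∈ t, 0 < q k ∧ q k < 2) (hs : ∀ k ∈ t, 0 < s k) (hw : ∀ k ∈ t, 0 < w k)
    (hu : ∀ k ∈ t, u k = s k ^ ((q k - 2) / 2)) :
    ∑ k ∈ t, lam k * weightPenalty (q k) (s k) (u k)
      ≤ ∑ k ∈ t, lam k * weightPenalty (q k) (s k) (w k) :=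
  sum_le_sum fun k hk =>
    mul_weightPenalty_le (hlam k hk) (hs k hk) (hq k hk).1 (hq k hk).2 (hw k hk) (hu k hk)

lemma eq_of_sum_mul_weightPenalty_eq (hlam : ∀ k ∈ t, 0 < lam k)
    (hq : ∀ k ∈ t, 0 < q k ∧ q k < 2) (hs : ∀ k ∈ t, 0 < s k) (hw : ∀ k ∈ t, 0 < w k)
    (hu : ∀ k ∈ t, u k = s k ^ ((q k - 2) / 2))
    (h : ∑ k ∈ t, lam k * weightPenalty (q k) (s k) (w k)
      = ∑ k ∈ t, lam k * weightPenalty (q k) (s k) (u k)) :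
    ∀ k ∈ t, w k = u k := by
  intro k hk
  obtain ⟨hq0, hq2⟩ := hq k hk
  have e := mul_left_cancel₀ (hlam k hk).ne' <| (sum_eq_sum_iff_of_le fun k hk =>
    mul_weightPenalty_le (hlam k hk).le (hs k hk) (hq k hk).1 (hq k hk).2 (hw k hk) (hu k hk)).1
      h.symm k hk
  rw [(weightPenalty_eq_iff (hs k hk) hq0 hq2 (hu k hk ▸ Real.rpow_pos_of_pos (hs k hk) _)).2
    (hu k hk), eq_comm] at e
  rw [hu k hk]
  exact (weightPenalty_eq_iff (hs k hk) hq0 hq2 (hw k hk)).1 e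

lemma sum_mul_sq_sub_two_mul_add_two_le (hc : ∀ k ∈ t, 0 ≤ c k) (hu : ∀ k ∈ t, u k = 1) :
    ∑ k ∈ t, c k * (u k ^ 2 - 2 * u k + 2) ≤ ∑ k ∈ t, c k * (w k ^ 2 - 2 * w k + 2) :=
  sum_le_sum fun k hk => mul_sq_sub_two_mul_add_two_le (w k) (hc k hk) (hu k hk)

lemma eq_of_sum_mul_sq_sub_two_mul_add_two_eq (hc : ∀ k ∈ t, 0 < c k)
    (hu : ∀ k ∈ t, u k = 1)
    (h : ∑ k ∈ t, c k * (w k ^ 2 - 2 * w k + 2) = ∑ k ∈ t, c k * (u k ^ 2 - 2 * u k + 2)) :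
    ∀ k ∈ t, w k = u k := by
  intro k hk
  have e := mul_left_cancel₀ (hc k hk).ne' <| (sum_eq_sum_iff_of_le fun k hk =>
    mul_sq_sub_two_mul_add_two_le (w k) (hc k hk).le (hu k hk)).1 h.symm k hk
  rw [hu k hk] at e ⊢
  exact sq_sub_two_mul_add_two_eq_one_iff.1 (by linarith)

end Blocks

/-- for fixed `x, a, ε > 0`, the map `w ↦ G(x,a,w,ε)` restricted to
positive weight vectors attains its minimum exactly at
`wₖ = (xₖ² + ε²)^{(qₖ-2)/2}`. -/
theorem stmt_2 {M N : ℕ} (A : Matrix (Fin M) (Fin N) ℝ) (b : Fin M → ℝ)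
    (lam q : Fin N → ℝ) (hlam : ∀ k, 0 < lam k)
    (hq : ∀ k, 1 ≤ q k ∧ q k ≤ 2)
    (x a : Fin N → ℝ) (ε : ℝ) (hε : 0 < ε)
    (wstar : Fin N → ℝ)
    (hwstar : ∀ k, wstar k = ((x k) ^ 2 + ε ^ 2) ^ ((q k - 2) / 2)) :
    (∀ w : Fin N → ℝ, (∀ k, 0 < w k) →
        Gfun A b lam q x a wstar ε ≤ Gfun A b lam q x a w ε) ∧
    (∀ w : Fin N → ℝ, (∀ k, 0 < w k) →
        Gfun A b lam q x a w ε = Gfun A b lam q x a wstar ε → w = wstar) := by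
  have hs : ∀ k, 0 < x k ^ 2 + ε ^ 2 := fun k => by positivity
  have hc : ∀ k, 0 < 2 * lam k * (x k ^ 2 + ε ^ 2) := fun k => by
    have := hlam k; have := hs k; positivity
  have hQ₁ : ∀ k ∈ univ.filter (fun k => 1 ≤ q k ∧ q k < 2), 0 < q k ∧ q k < 2 :=
    fun k hk => ⟨by linarith [(mem_filter.1 hk).2.1], (mem_filter.1 hk).2.2⟩
  have hQ₂ : ∀ k ∈ univ.filter (fun k => q k = 2), wstar k = 1 :=
    fun k hk => by simp [hwstar k, (mem_filter.1 hk).2]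
  suffices key : ∀ w : Fin N → ℝ, (∀ k, 0 < w k) →
      Gfun A b lam q x a wstar ε ≤ Gfun A b lam q x a w ε ∧
        (Gfun A b lam q x a w ε = Gfun A b lam q x a wstar ε → w = wstar) from
    ⟨fun w hw => (key w hw).1, fun w hw => (key w hw).2⟩
  intro w hw
  have h₁ := sum_mul_weightPenalty_le (fun k _ => (hlam k).le) hQ₁ (fun k _ => hs k)
    (fun k _ => hw k) (fun k _ => hwstar k)
  have h₂ := sum_mul_sq_sub_two_mul_add_two_le (w := w) (fun k _ => (hc k).le) hQ₂
  unfold Gfun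
  unfold weightPenalty at h₁
  refine ⟨by linarith, fun hG => funext fun k => ?_⟩
  rcases (hq k).2.lt_or_eq with hk | hk
  · exact eq_of_sum_mul_weightPenalty_eq (fun k _ => hlam k) hQ₁ (fun k _ => hs k)
      (fun k _ => hw k) (fun k _ => hwstar k) (by unfold weightPenalty; linarith) k
      (by simp [hk, (hq k).1])
  · exact eq_of_sum_mul_sq_sub_two_mul_add_two_eq (fun k _ => hc k) hQ₂ (by linarith) k
      (by simp [hk])
end

section
/- Fix a ∈ ℝ^N, ε > 0, and let w ∈ ℝ^N be the weight vector with components w_k = (a_k² + ε²)^{(q_k − 2)/2}. Then the function x ↦ G(x, a, w, ε) has a unique minimizer over ℝ^N, given component-wise by x_k = (1 + λ_k q_k w_k)^{−1} ( a_k + (Aᵀ b)_k − (Aᵀ A a)_k ) for k = 1,…,N. -/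
open Finset Filter Matrix Topology

/-- for fixed `a, ε > 0` and weights `wₖ = (aₖ² + ε²)^{(qₖ-2)/2}`,
the map `x ↦ G(x,a,w,ε)` has a unique minimizer, given component-wise by
`xₖ = (1 + λₖ qₖ wₖ)⁻¹ (aₖ + (Aᵀb)ₖ - (AᵀA a)ₖ)`. -/
theorem stmt_3 {M N : ℕ} (A : Matrix (Fin M) (Fin N) ℝ) (b : Fin M → ℝ)
    (lam q : Fin N → ℝ) (hlam : ∀ k, 0 < lam k)
    (hq : ∀ k, 1 ≤ q k ∧ q k ≤ 2)
    (a : Fin N → ℝ) (ε : ℝ) (hε : 0 < ε)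
    (w : Fin N → ℝ) (hw : ∀ k, w k = ((a k) ^ 2 + ε ^ 2) ^ ((q k - 2) / 2))
    (xstar : Fin N → ℝ)
    (hxstar : ∀ k, xstar k =
      (1 + lam k * q k * w k)⁻¹
        * (a k + Aᵀ.mulVec b k - Aᵀ.mulVec (A.mulVec a) k)) :
    (∀ x : Fin N → ℝ, Gfun A b lam q xstar a w ε ≤ Gfun A b lam q x a w ε) ∧
    (∀ x : Fin N → ℝ,
      (∀ y : Fin N → ℝ, Gfun A b lam q x a w ε ≤ Gfun A b lam q y a w ε) →
        x = xstar) := by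
  classical
  set c : Fin N → ℝ := fun k => 1 + lam k * q k * w k with hc
  set u : Fin N → ℝ := fun k => Aᵀ.mulVec (A.mulVec a) k - Aᵀ.mulVec b k with hu
  -- positivity of w and c
  have hwpos : ∀ k, 0 < w k := by
    intro k; rw [hw k]
    exact Real.rpow_pos_of_pos (by nlinarith [sq_nonneg (a k), pow_pos hε 2]) _
  have hcpos : ∀ k, 0 < c k := by
    intro k
    have h1 := (hq k).1
    have : 0 < lam k * q k * w k := by
      have hq0 : (0:ℝ) < q k := lt_of_lt_of_le one_pos h1
      exact mul_pos (mul_pos (hlam k) hq0) (hwpos k)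
    simp only [hc]; linarith
  have hw2 : ∀ k, q k = 2 → w k = 1 := by
    intro k h
    rw [hw k, h]
    norm_num
  -- swap lemma
  have hswap : ∀ (x : Fin N → ℝ) (v : Fin M → ℝ),
      ∑ i, A.mulVec x i * v i = ∑ k, x k * Aᵀ.mulVec v k := by
    intro x v
    simp only [Matrix.mulVec, dotProduct, Matrix.transpose_apply,
      Finset.sum_mul, Finset.mul_sum]
    rw [Finset.sum_comm]
    apply Finset.sum_congr rfl
    intro k _
    apply Finset.sum_congr rfl
    intro i _
    ring
  -- matrix part normal form
  have hmat : ∀ x : Fin N → ℝ,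
      (∑ i, (A.mulVec x i - b i) ^ 2) - (∑ i, (A.mulVec (x - a) i) ^ 2)
      = (∑ k, 2 * x k * u k) + ∑ i, ((b i) ^ 2 - (A.mulVec a i) ^ 2) := by
    intro x
    have h1 : ∀ i, A.mulVec (x - a) i = A.mulVec x i - A.mulVec a i := by
      intro i; rw [Matrix.mulVec_sub]; rfl
    have h2 : (∑ i, (A.mulVec x i - b i) ^ 2) - (∑ i, (A.mulVec (x - a) i) ^ 2)
        = (∑ i, 2 * (A.mulVec x i * (A.mulVec a i - b i)))
          + ∑ i, ((b i) ^ 2 - (A.mulVec a i) ^ 2) := by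
      rw [← Finset.sum_sub_distrib, ← Finset.sum_add_distrib]
      apply Finset.sum_congr rfl
      intro i _
      rw [h1 i]; ring
    rw [h2]
    congr 1
    have := hswap x (fun i => A.mulVec a i - b i)
    calc ∑ i, 2 * (A.mulVec x i * (A.mulVec a i - b i))
        = 2 * ∑ i, A.mulVec x i * (fun i => A.mulVec a i - b i) i := by
          rw [Finset.mul_sum]
      _ = 2 * ∑ k, x k * Aᵀ.mulVec (fun i => A.mulVec a i - b i) k := by rw [hswap]
      _ = ∑ k, 2 * x k * u k := by
          rw [Finset.mul_sum]
          apply Finset.sum_congr rfl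
          intro k _
          have : Aᵀ.mulVec (fun i => A.mulVec a i - b i) k = u k := by
            simp only [hu]
            have : (fun i => A.mulVec a i - b i) = A.mulVec a - b := rfl
            rw [this, Matrix.mulVec_sub]; rfl
          rw [this]; ring
  -- filter complement
  have hfilt : Finset.univ.filter (fun k => q k = 2)
      = Finset.univ.filter (fun k => ¬ (1 ≤ q k ∧ q k < 2)) := by
    apply Finset.filter_congr
    intro k _
    constructor
    · intro h h2; exact absurd h2.2 (by rw [h]; exact lt_irrefl 2)
    · intro h
      by_contra hne
      exact h ⟨(hq k).1, lt_of_le_of_ne (hq k).2 hne⟩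
  -- normal form of Gfun
  set C : ℝ := (∑ i, ((b i) ^ 2 - (A.mulVec a i) ^ 2)) + (∑ k, (a k) ^ 2)
      + (∑ k ∈ Finset.univ.filter (fun k => 1 ≤ q k ∧ q k < 2),
          lam k * (q k * w k * ε ^ 2 + (2 - q k) * (w k) ^ (q k / (q k - 2))))
      + (∑ k ∈ Finset.univ.filter (fun k => q k = 2), 2 * lam k * ε ^ 2) with hC
  have hG : ∀ x : Fin N → ℝ, Gfun A b lam q x a w ε
      = (∑ k, (c k * x k ^ 2 - 2 * (a k - u k) * x k)) + C := by
    intro x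
    rw [Gfun, hmat x]
    have hS1 : ∑ k ∈ Finset.univ.filter (fun k => 1 ≤ q k ∧ q k < 2),
        lam k * (q k * w k * ((x k) ^ 2 + ε ^ 2)
          + (2 - q k) * (w k) ^ (q k / (q k - 2)))
      = (∑ k ∈ Finset.univ.filter (fun k => 1 ≤ q k ∧ q k < 2),
          lam k * q k * w k * (x k) ^ 2)
        + ∑ k ∈ Finset.univ.filter (fun k => 1 ≤ q k ∧ q k < 2),
          lam k * (q k * w k * ε ^ 2 + (2 - q k) * (w k) ^ (q k / (q k - 2))) := by
      rw [← Finset.sum_add_distrib]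
      apply Finset.sum_congr rfl
      intro k _; ring
    have hS2 : ∑ k ∈ Finset.univ.filter (fun k => q k = 2),
        2 * lam k * ((x k) ^ 2 + ε ^ 2) * ((w k) ^ 2 - 2 * w k + 2)
      = (∑ k ∈ Finset.univ.filter (fun k => q k = 2),
          lam k * q k * w k * (x k) ^ 2)
        + ∑ k ∈ Finset.univ.filter (fun k => q k = 2), 2 * lam k * ε ^ 2 := by
      rw [← Finset.sum_add_distrib]
      apply Finset.sum_congr rfl
      intro k hk
      have hk2 : q k = 2 := (Finset.mem_filter.mp hk).2
      rw [hw2 k hk2, hk2]; ring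
    rw [hS1, hS2]
    have hQ : (∑ k ∈ Finset.univ.filter (fun k => 1 ≤ q k ∧ q k < 2),
          lam k * q k * w k * (x k) ^ 2)
        + (∑ k ∈ Finset.univ.filter (fun k => q k = 2),
          lam k * q k * w k * (x k) ^ 2)
      = ∑ k, lam k * q k * w k * (x k) ^ 2 := by
      rw [hfilt]
      exact Finset.sum_filter_add_sum_filter_not _ _ _
    have key : (∑ k, 2 * x k * u k) + (∑ k, (x k - a k) ^ 2)
        + (∑ k, lam k * q k * w k * (x k) ^ 2)
      = (∑ k, (c k * x k ^ 2 - 2 * (a k - u k) * x k)) + ∑ k, (a k) ^ 2 := by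
      rw [← Finset.sum_add_distrib, ← Finset.sum_add_distrib, ← Finset.sum_add_distrib]
      apply Finset.sum_congr rfl
      intro k _
      simp only [hc]
      ring
    rw [hC]
    linarith [key]
  -- key consequence
  have hcx : ∀ k, c k * xstar k = a k - u k := by
    intro k
    rw [hxstar k]
    have : a k + Aᵀ.mulVec b k - Aᵀ.mulVec (A.mulVec a) k = a k - u k := by
      simp only [hu]; ring
    rw [this, ← mul_assoc, mul_inv_cancel₀ (ne_of_gt (hcpos k)), one_mul]
  have hdiff : ∀ x : Fin N → ℝ,
      Gfun A b lam q x a w ε - Gfun A b lam q xstar a w ε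
      = ∑ k, c k * (x k - xstar k) ^ 2 := by
    intro x
    rw [hG x, hG xstar]
    have : (∑ k, (c k * x k ^ 2 - 2 * (a k - u k) * x k))
        - (∑ k, (c k * xstar k ^ 2 - 2 * (a k - u k) * xstar k))
        = ∑ k, c k * (x k - xstar k) ^ 2 := by
      rw [← Finset.sum_sub_distrib]
      apply Finset.sum_congr rfl
      intro k _
      rw [← hcx k]
      ring
    linarith [this]
  constructor
  · intro x
    have h := hdiff x
    have hnn : 0 ≤ ∑ k, c k * (x k - xstar k) ^ 2 :=
      Finset.sum_nonneg fun k _ => mul_nonneg (hcpos k).le (sq_nonneg _)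
    linarith
  · intro x hmin
    have hle := hmin xstar
    have h := hdiff x
    have hsum : ∑ k, c k * (x k - xstar k) ^ 2 ≤ 0 := by linarith
    have hzero : ∀ k ∈ Finset.univ, c k * (x k - xstar k) ^ 2 = 0 := by
      apply (Finset.sum_eq_zero_iff_of_nonneg (fun k _ => mul_nonneg (hcpos k).le (sq_nonneg _))).mp
      exact le_antisymm hsum (Finset.sum_nonneg fun k _ => mul_nonneg (hcpos k).le (sq_nonneg _))
    funext k
    have h0 := hzero k (Finset.mem_univ k)
    have : (x k - xstar k) ^ 2 = 0 := by
      rcases mul_eq_zero.mp h0 with h | h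
      · exact absurd h (ne_of_gt (hcpos k))
      · exact h
    have := pow_eq_zero_iff (n := 2) (by norm_num) |>.mp this
    linarith
end

section
/- For every x ∈ ℝ^N and ε > 0, with w(x,ε) the weight vector with components (x_k² + ε²)^{(q_k − 2)/2}, one has 0 ≤ F(x) ≤ G(x, x, w(x,ε), ε). -/
open Finset Filter Matrix Topology

/-- with `w(x,ε)ₖ = (xₖ² + ε²)^{(qₖ-2)/2}`, one has
`0 ≤ F(x) ≤ G(x,x,w(x,ε),ε)`. -/
theorem stmt_5 {M N : ℕ} (A : Matrix (Fin M) (Fin N) ℝ) (b : Fin M → ℝ)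
    (lam q : Fin N → ℝ) (hlam : ∀ k, 0 < lam k)
    (hq : ∀ k, 1 ≤ q k ∧ q k ≤ 2)
    (x : Fin N → ℝ) (ε : ℝ) (hε : 0 < ε) :
    0 ≤ Ffun A b lam q x ∧
      Ffun A b lam q x
        ≤ Gfun A b lam q x x (fun k => ((x k) ^ 2 + ε ^ 2) ^ ((q k - 2) / 2)) ε := by
  constructor
  · apply add_nonneg (Finset.sum_nonneg fun i _ => sq_nonneg _)
    apply mul_nonneg (by norm_num)
    exact Finset.sum_nonneg fun k _ =>
      mul_nonneg (hlam k).le (Real.rpow_nonneg (abs_nonneg _) _)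
  · unfold Ffun Gfun
    simp only [sub_self, Matrix.mulVec_zero, Pi.zero_apply, ne_eq, OfNat.ofNat_ne_zero,
      not_false_eq_true, zero_pow, Finset.sum_const_zero, sub_zero, add_zero]
    set w : Fin N → ℝ := fun k => ((x k) ^ 2 + ε ^ 2) ^ ((q k - 2) / 2) with hw
    have hsplit : (2 : ℝ) * ∑ k, lam k * |x k| ^ (q k)
        = (∑ k ∈ Finset.univ.filter (fun k => 1 ≤ q k ∧ q k < 2),
            2 * (lam k * |x k| ^ (q k)))
          + ∑ k ∈ Finset.univ.filter (fun k => q k = 2),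
            2 * (lam k * |x k| ^ (q k)) := by
      rw [Finset.mul_sum]
      have hfc : Finset.univ.filter (fun k => 1 ≤ q k ∧ q k < 2)
          = Finset.univ.filter (fun k : Fin N => ¬ q k = 2) := by
        apply Finset.filter_congr
        intro k _
        constructor
        · rintro ⟨-, h2⟩ he
          rw [he] at h2; exact lt_irrefl 2 h2
        · intro h
          exact ⟨(hq k).1, lt_of_le_of_ne (hq k).2 h⟩
      rw [hfc, Finset.sum_filter_not_add_sum_filter]
    rw [hsplit]
    have hQ1 : ∀ k ∈ Finset.univ.filter (fun k => 1 ≤ q k ∧ q k < 2),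
        2 * (lam k * |x k| ^ (q k))
          ≤ lam k * (q k * w k * ((x k) ^ 2 + ε ^ 2)
              + (2 - q k) * (w k) ^ (q k / (q k - 2))) := by
      intro k hk
      simp only [Finset.mem_filter] at hk
      obtain ⟨-, h1, h2⟩ := hk
      set c : ℝ := (x k) ^ 2 + ε ^ 2 with hc
      have hcpos : 0 < c := by positivity
      have e1 : w k * c = c ^ (q k / 2) := by
        calc w k * c = c ^ ((q k - 2) / 2) * c ^ (1 : ℝ) := by rw [Real.rpow_one]
          _ = c ^ ((q k - 2) / 2 + 1) := (Real.rpow_add hcpos _ _).symm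
          _ = c ^ (q k / 2) := by ring_nf
      have e2 : (w k) ^ (q k / (q k - 2)) = c ^ (q k / 2) := by
        show (c ^ ((q k - 2) / 2)) ^ (q k / (q k - 2)) = c ^ (q k / 2)
        rw [← Real.rpow_mul hcpos.le]
        congr 1
        have hne : q k - 2 ≠ 0 := by linarith
        field_simp
      have e3 : |x k| ^ (q k) ≤ c ^ (q k / 2) := by
        have h4 : |x k| ^ (q k) = ((x k) ^ 2) ^ (q k / 2) := by
          rw [← sq_abs, ← Real.rpow_natCast (|x k|) 2, ← Real.rpow_mul (abs_nonneg _)]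
          congr 1
          push_cast
          ring
        rw [h4]
        exact Real.rpow_le_rpow (sq_nonneg _) (by nlinarith [sq_nonneg ε])
          (by positivity)
      calc 2 * (lam k * |x k| ^ (q k)) ≤ 2 * (lam k * c ^ (q k / 2)) := by
            have := mul_le_mul_of_nonneg_left e3 (hlam k).le
            linarith
        _ = lam k * (q k * (c ^ (q k / 2)) + (2 - q k) * (c ^ (q k / 2))) := by ring
        _ = lam k * (q k * w k * c + (2 - q k) * (w k) ^ (q k / (q k - 2))) := by
            rw [e2, mul_assoc, e1]
    have hQ2 : ∀ k ∈ Finset.univ.filter (fun k => q k = 2),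
        2 * (lam k * |x k| ^ (q k))
          ≤ 2 * lam k * ((x k) ^ 2 + ε ^ 2) * ((w k) ^ 2 - 2 * w k + 2) := by
      intro k hk
      simp only [Finset.mem_filter] at hk
      have hq2 : q k = 2 := hk.2
      have hwk : w k = 1 := by
        show ((x k) ^ 2 + ε ^ 2) ^ ((q k - 2) / 2) = 1
        rw [hq2]
        norm_num
      have habs : |x k| ^ (q k) = (x k) ^ 2 := by
        rw [hq2, show (2 : ℝ) = ((2 : ℕ) : ℝ) by norm_num, Real.rpow_natCast, sq_abs]
      rw [hwk, habs]
      nlinarith [(hlam k).le, sq_nonneg ε, mul_nonneg (hlam k).le (sq_nonneg ε)]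
    have := add_le_add (Finset.sum_le_sum hQ1) (Finset.sum_le_sum hQ2)
    linarith
end

section
/- Let {x^n} be a sequence in ℝ^N converging to x ∈ ℝ^N and {ε_n} a sequence of positive reals converging to 0. With w^n = w(x^n, ε_n) the weight vector with components ((x^n_k)² + ε_n²)^{(q_k − 2)/2}, the surrogate values converge to the functional value: G(x^n, x^n, w^n, ε_n) → F(x) as n → ∞. -/
open Finset Filter Matrix Topology

/-- if `xⁿ → x` and `εₙ → 0` with `εₙ > 0`, then, with
`wⁿₖ = ((xⁿₖ)² + εₙ²)^{(qₖ-2)/2}`, the surrogate values converge: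
`G(xⁿ,xⁿ,wⁿ,εₙ) → F(x)`. -/
theorem stmt_6 {M N : ℕ} (A : Matrix (Fin M) (Fin N) ℝ) (b : Fin M → ℝ)
    (lam q : Fin N → ℝ) (hlam : ∀ k, 0 < lam k)
    (hq : ∀ k, 1 ≤ q k ∧ q k ≤ 2)
    (x : ℕ → Fin N → ℝ) (xbar : Fin N → ℝ)
    (hx : Tendsto x atTop (nhds xbar))
    (eps : ℕ → ℝ) (hepspos : ∀ n, 0 < eps n)
    (heps : Tendsto eps atTop (nhds 0)) :
    Tendsto
      (fun n => Gfun A b lam q (x n) (x n)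
        (fun k => ((x n k) ^ 2 + (eps n) ^ 2) ^ ((q k - 2) / 2)) (eps n))
      atTop (nhds (Ffun A b lam q xbar)) := by

  -- Abbreviations
  set Q1 : Finset (Fin N) := Finset.univ.filter (fun k => 1 ≤ q k ∧ q k < 2) with hQ1
  set Q2 : Finset (Fin N) := Finset.univ.filter (fun k => q k = 2) with hQ2
  -- Step 1: rewrite Gfun along the sequence
  have hGeq : ∀ n, Gfun A b lam q (x n) (x n)
      (fun k => ((x n k) ^ 2 + (eps n) ^ 2) ^ ((q k - 2) / 2)) (eps n)
      = (∑ i, (A.mulVec (x n) i - b i) ^ 2)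
        + ((∑ k ∈ Q1, 2 * lam k * ((x n k) ^ 2 + (eps n) ^ 2) ^ (q k / 2))
        + (∑ k ∈ Q2, 2 * lam k * ((x n k) ^ 2 + (eps n) ^ 2))) := by
    intro n
    unfold Gfun
    have h0 : x n - x n = 0 := sub_self _
    rw [h0, Matrix.mulVec_zero]
    simp only [Pi.zero_apply, ne_eq, OfNat.ofNat_ne_zero, not_false_eq_true, zero_pow,
      Finset.sum_const_zero, sub_zero, sub_self, add_zero]
    have hS1 : ∑ k ∈ Q1, lam k * (q k * ((x n k) ^ 2 + (eps n) ^ 2) ^ ((q k - 2) / 2)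
          * ((x n k) ^ 2 + (eps n) ^ 2)
        + (2 - q k) * (((x n k) ^ 2 + (eps n) ^ 2) ^ ((q k - 2) / 2)) ^ (q k / (q k - 2)))
        = ∑ k ∈ Q1, 2 * lam k * ((x n k) ^ 2 + (eps n) ^ 2) ^ (q k / 2) := by
      apply Finset.sum_congr rfl
      intro k hk
      rw [hQ1, Finset.mem_filter] at hk
      obtain ⟨-, -, hk2⟩ := hk
      have hqne : q k - 2 ≠ 0 := by linarith
      set t : ℝ := (x n k) ^ 2 + (eps n) ^ 2 with ht
      have htpos : 0 < t := by
        have he := hepspos n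
        positivity
      have h1 : (t ^ ((q k - 2) / 2)) ^ (q k / (q k - 2)) = t ^ (q k / 2) := by
        rw [← Real.rpow_mul htpos.le]
        congr 1
        field_simp
      have h2 : q k * t ^ ((q k - 2) / 2) * t = q k * t ^ (q k / 2) := by
        have : t ^ ((q k - 2) / 2) * t = t ^ (q k / 2) := by
          nth_rewrite 2 [← Real.rpow_one t]
          rw [← Real.rpow_add htpos]
          congr 1
          ring
        rw [mul_assoc, this]
      rw [h1, h2]
      ring
    have hS2 : ∑ k ∈ Q2, 2 * lam k * ((x n k) ^ 2 + (eps n) ^ 2)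
          * ((((x n k) ^ 2 + (eps n) ^ 2) ^ ((q k - 2) / 2)) ^ 2
             - 2 * (((x n k) ^ 2 + (eps n) ^ 2) ^ ((q k - 2) / 2)) + 2)
        = ∑ k ∈ Q2, 2 * lam k * ((x n k) ^ 2 + (eps n) ^ 2) := by
      apply Finset.sum_congr rfl
      intro k hk
      rw [hQ2, Finset.mem_filter] at hk
      have h0 : (q k - 2) / 2 = 0 := by rw [hk.2]; ring
      rw [h0, Real.rpow_zero]
      ring
    rw [hS1, hS2]
    ring
  -- Step 2: rewrite Ffun split over Q1, Q2
  have hFeq : Ffun A b lam q xbar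
      = (∑ i, (A.mulVec xbar i - b i) ^ 2)
        + ((∑ k ∈ Q1, 2 * lam k * |xbar k| ^ (q k))
        + (∑ k ∈ Q2, 2 * lam k * |xbar k| ^ (q k))) := by
    unfold Ffun
    congr 1
    rw [Finset.mul_sum]
    have hsplit := Finset.sum_filter_add_sum_filter_not Finset.univ
      (fun k => 1 ≤ q k ∧ q k < 2) (fun k => 2 * (lam k * |xbar k| ^ (q k)))
    have hQ2eq : Finset.univ.filter (fun k => ¬(1 ≤ q k ∧ q k < 2)) = Q2 := by
      rw [hQ2]
      apply Finset.filter_congr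
      intro k _
      constructor
      · intro h
        push_neg at h
        have := h (hq k).1
        linarith [(hq k).2]
      · intro h
        push_neg
        intro _
        linarith [h.le]
    rw [hQ2eq] at hsplit
    rw [← hsplit]
    congr 1 <;> · apply Finset.sum_congr rfl; intro k _; ring
  rw [hFeq]
  simp only [hGeq]
  -- pointwise convergence of components
  have hxk : ∀ k, Tendsto (fun n => x n k) atTop (nhds (xbar k)) := by
    intro k
    exact ((continuous_apply k).tendsto xbar).comp hx
  have htk : ∀ k, Tendsto (fun n => (x n k) ^ 2 + (eps n) ^ 2) atTop
      (nhds ((xbar k) ^ 2)) := by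
    intro k
    have h1 : Tendsto (fun n => (x n k) ^ 2) atTop (nhds ((xbar k) ^ 2)) :=
      (hxk k).pow 2
    have h2 : Tendsto (fun n => (eps n) ^ 2) atTop (nhds 0) := by
      have := heps.pow 2
      simpa using this
    simpa using h1.add h2
  apply Tendsto.add
  · -- residual term
    have hc : Continuous (fun y : Fin N → ℝ => ∑ i, (A.mulVec y i - b i) ^ 2) := by
      apply continuous_finset_sum
      intro i _
      apply Continuous.pow
      apply Continuous.sub _ continuous_const
      simp only [Matrix.mulVec, dotProduct]
      exact continuous_finset_sum _ (fun j _ => (continuous_const.mul (continuous_apply j)))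
    exact (hc.tendsto xbar).comp hx
  apply Tendsto.add
  · -- Q1 sum
    apply tendsto_finset_sum
    intro k hk
    rw [hQ1, Finset.mem_filter] at hk
    have hq1 : (1:ℝ) ≤ q k := hk.2.1
    have hlim : Tendsto (fun n => ((x n k) ^ 2 + (eps n) ^ 2) ^ (q k / 2)) atTop
        (nhds (((xbar k) ^ 2) ^ (q k / 2))) := by
      have hc : ContinuousAt (fun s : ℝ => s ^ (q k / 2)) ((xbar k) ^ 2) :=
        Real.continuousAt_rpow_const _ _ (Or.inr (by linarith))
      exact hc.tendsto.comp (htk k)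
    have heq : ((xbar k) ^ 2 : ℝ) ^ (q k / 2) = |xbar k| ^ (q k) := by
      rw [← sq_abs]
      rw [show ((|xbar k| ^ 2 : ℝ)) = |xbar k| ^ (2:ℝ) by
        rw [← Real.rpow_natCast |xbar k| 2]; norm_num]
      rw [← Real.rpow_mul (abs_nonneg _)]
      congr 1
      ring
    rw [← heq]
    exact tendsto_const_nhds.mul hlim
  · -- Q2 sum
    apply tendsto_finset_sum
    intro k hk
    rw [hQ2, Finset.mem_filter] at hk
    have heq : |xbar k| ^ (q k) = (xbar k) ^ 2 := by
      rw [hk.2, show ((2:ℝ)) = ((2:ℕ):ℝ) by norm_num, Real.rpow_natCast, sq_abs]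
    rw [heq]
    exact tendsto_const_nhds.mul (htk k)
end

section
/- Assume ‖A‖₂ < 1. Then the successive differences of the IRLS iterates are square-summable, with (1 − ‖A‖₂²) Σ_{n=1}^∞ ‖x^n − x^{n+1}‖₂² ≤ G(x¹, x¹, w¹, ε₁); in particular ‖x^n − x^{n+1}‖₂ → 0 as n → ∞. -/
open Finset Filter Matrix Topology

/-!
As a function of `x`, `G(x, a, w, ε)` is a separable quadratic with curvature
`1 + λₖ qₖ wₖ ≥ 1` in each coordinate, minimised by the IRLS update of `a`; hence
`G(xⁿ⁺¹, xⁿ, wⁿ, εₙ) ≤ G(xⁿ, xⁿ, wⁿ, εₙ) - ‖xⁿ - xⁿ⁺¹‖²`. Moving the second argument from `xⁿ`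
to `xⁿ⁺¹` adds `‖A(xⁿ⁺¹ - xⁿ)‖² - ‖xⁿ⁺¹ - xⁿ‖²`, and passing to `(wⁿ⁺¹, εₙ₊₁)` does not
increase `G`: by weighted AM-GM, `w ↦ q w s + (2 - q) w^{q/(q-2)}` is minimal at
`w = s^{(q-2)/2}`, where it equals `2 s^{q/2}`, monotone in `s = xₖ² + ε²`, and `εₙ` is
nonincreasing. So `Gₙ = G(xⁿ, xⁿ, wⁿ, εₙ) ≥ 0` drops by at least `(1 - ‖A‖₂²) ‖xⁿ - xⁿ⁺¹‖²`
at every step, and the sum of these drops from `n = 1` on telescopes to at most `G₁`.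
-/

lemma sum_mulVec_sq_le_specNorm_sq_mul {M N : ℕ} (A : Matrix (Fin M) (Fin N) ℝ)
    (v : Fin N → ℝ) : ∑ i, (A *ᵥ v) i ^ 2 ≤ specNorm A ^ 2 * ∑ k, v k ^ 2 := by
  have hnorm : ∀ {n : ℕ} (u : Fin n → ℝ), ‖WithLp.toLp 2 u‖ ^ 2 = ∑ k, u k ^ 2 := by
    intro n u
    simp [EuclideanSpace.norm_eq, Real.sq_sqrt (Finset.sum_nonneg fun _ _ => sq_nonneg _)]
  have h := (LinearMap.toContinuousLinearMap (Matrix.toEuclideanLin A)).le_opNorm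
    (WithLp.toLp 2 v)
  simp only [LinearMap.coe_toContinuousLinearMap', Matrix.toLpLin_toLp,
    Matrix.toLin'_apply] at h
  rw [← hnorm, ← hnorm, specNorm, ← mul_pow]
  exact pow_le_pow_left₀ (norm_nonneg _) h 2

lemma sum_mulVec_mul_eq_sum_mul_transpose_mulVec {M N : ℕ} (A : Matrix (Fin M) (Fin N) ℝ)
    (z : Fin N → ℝ) (c : Fin M → ℝ) :
    ∑ i, (A *ᵥ z) i * c i = ∑ k, z k * (Aᵀ *ᵥ c) k := by
  have h := Matrix.dotProduct_mulVec c A z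
  rw [← Matrix.mulVec_transpose, dotProduct_comm, dotProduct_comm _ z] at h
  simpa only [dotProduct] using h

lemma mul_rpow_sub_two_div_two_add_eq (q : ℝ) (hq : q ≠ 2) {s : ℝ} (hs : 0 < s) :
    q * s ^ ((q - 2) / 2) * s + (2 - q) * (s ^ ((q - 2) / 2)) ^ (q / (q - 2))
      = 2 * s ^ (q / 2) := by
  have hq2 : q - 2 ≠ 0 := sub_ne_zero.2 hq
  rw [mul_assoc, ← Real.rpow_add_one hs.ne', ← Real.rpow_mul hs.le]
  have e1 : (q - 2) / 2 + 1 = q / 2 := by ring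
  have e2 : (q - 2) / 2 * (q / (q - 2)) = q / 2 := by field_simp
  rw [e1, e2]
  ring

lemma two_mul_rpow_le_mul_add_rpow {q s w : ℝ} (hq0 : 0 ≤ q) (hq2 : q < 2) (hs : 0 ≤ s)
    (hw : 0 < w) : 2 * s ^ (q / 2) ≤ q * w * s + (2 - q) * w ^ (q / (q - 2)) := by
  have amgm := Real.geom_mean_le_arith_mean2_weighted (w₁ := q / 2) (w₂ := (2 - q) / 2)
    (p₁ := w * s) (p₂ := w ^ (q / (q - 2))) (by linarith) (by linarith)
    (by positivity) (Real.rpow_nonneg hw.le _) (by ring)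
  have hexp : q / (q - 2) * ((2 - q) / 2) = -(q / 2) := by
    field_simp [(sub_neg.2 hq2).ne]
    ring
  rw [Real.mul_rpow hw.le hs, ← Real.rpow_mul hw.le, hexp, mul_right_comm, Real.rpow_neg hw.le,
    mul_inv_cancel₀ (Real.rpow_pos_of_pos hw _).ne', one_mul] at amgm
  linarith

section Surrogate

variable {M N : ℕ} (A : Matrix (Fin M) (Fin N) ℝ) (b : Fin M → ℝ) (lam q : Fin N → ℝ)

lemma Gfun_eq_Gfun_self_sub_add (x a w : Fin N → ℝ) (ε : ℝ) :
    Gfun A b lam q x a w ε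
      = Gfun A b lam q x x w ε - ∑ i, (A *ᵥ (x - a)) i ^ 2 + ∑ k, (x k - a k) ^ 2 := by
  simp only [Gfun, sub_self, Matrix.mulVec_zero, Pi.zero_apply, ne_eq, OfNat.ofNat_ne_zero,
    not_false_eq_true, zero_pow, Finset.sum_const_zero]
  ring

lemma Gfun_self_nonneg (hlam : ∀ k, 0 ≤ lam k) (x w : Fin N → ℝ) (hw : ∀ k, 0 ≤ w k)
    (ε : ℝ) : 0 ≤ Gfun A b lam q x x w ε := by
  simp only [Gfun, sub_self, Matrix.mulVec_zero, Pi.zero_apply, ne_eq, OfNat.ofNat_ne_zero,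
    not_false_eq_true, zero_pow, Finset.sum_const_zero, sub_zero, add_zero]
  have hfit : 0 ≤ ∑ i, ((A *ᵥ x) i - b i) ^ 2 := Finset.sum_nonneg fun i _ => sq_nonneg _
  have hQ₁ : 0 ≤ ∑ k ∈ univ.filter (fun k => 1 ≤ q k ∧ q k < 2),
      lam k * (q k * w k * (x k ^ 2 + ε ^ 2) + (2 - q k) * w k ^ (q k / (q k - 2))) := by
    refine Finset.sum_nonneg fun k hk => ?_
    obtain ⟨hq1, hq2⟩ := (Finset.mem_filter.1 hk).2
    refine mul_nonneg (hlam k) (add_nonneg ?_ ?_)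
    · exact mul_nonneg (mul_nonneg (by linarith) (hw k)) (by positivity)
    · exact mul_nonneg (by linarith) (Real.rpow_nonneg (hw k) _)
  have hQ₂ : 0 ≤ ∑ k ∈ univ.filter (fun k => q k = 2),
      2 * lam k * (x k ^ 2 + ε ^ 2) * (w k ^ 2 - 2 * w k + 2) := by
    exact Finset.sum_nonneg fun k _ => mul_nonneg (mul_nonneg (by linarith [hlam k])
      (by positivity)) (by nlinarith [sq_nonneg (w k - 1)])
  linarith

lemma Gfun_eq_sum_add_const (hq : ∀ k, 1 ≤ q k ∧ q k ≤ 2) (a w : Fin N → ℝ)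
    (hw_two : ∀ k, q k = 2 → w k = 1) (ε : ℝ) :
    ∃ C, ∀ z, Gfun A b lam q z a w ε = ∑ k, ((z k - a k) ^ 2 + lam k * q k * w k * z k ^ 2
      + 2 * (z k * (Aᵀ *ᵥ (A *ᵥ a - b)) k)) + C := by
  refine ⟨∑ i, (b i ^ 2 - (A *ᵥ a) i ^ 2) + ∑ k, lam k * q k * w k * ε ^ 2
    + ∑ k ∈ univ.filter (fun k => 1 ≤ q k ∧ q k < 2),
        lam k * (2 - q k) * w k ^ (q k / (q k - 2)), fun z => ?_⟩
  have hfit : ∑ i, ((A *ᵥ z) i - b i) ^ 2 - ∑ i, (A *ᵥ (z - a)) i ^ 2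
      = 2 * ∑ i, (A *ᵥ z) i * (A *ᵥ a - b) i + ∑ i, (b i ^ 2 - (A *ᵥ a) i ^ 2) := by
    rw [Finset.mul_sum, ← Finset.sum_sub_distrib, ← Finset.sum_add_distrib]
    refine Finset.sum_congr rfl fun i _ => ?_
    simp only [Matrix.mulVec_sub, Pi.sub_apply]
    ring
  have hpen : ∑ k ∈ univ.filter (fun k => 1 ≤ q k ∧ q k < 2),
        lam k * (q k * w k * (z k ^ 2 + ε ^ 2) + (2 - q k) * w k ^ (q k / (q k - 2)))
      + ∑ k ∈ univ.filter (fun k => q k = 2),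
        2 * lam k * (z k ^ 2 + ε ^ 2) * (w k ^ 2 - 2 * w k + 2)
      = ∑ k, lam k * q k * w k * z k ^ 2 + ∑ k, lam k * q k * w k * ε ^ 2
        + ∑ k ∈ univ.filter (fun k => 1 ≤ q k ∧ q k < 2),
            lam k * (2 - q k) * w k ^ (q k / (q k - 2)) := by
    simp only [Finset.sum_filter, ← Finset.sum_add_distrib]
    refine Finset.sum_congr rfl fun k _ => ?_
    by_cases hlt : q k < 2
    · simp only [hlt, (hq k).1, hlt.ne, and_self, if_true, if_false]
      ring
    · have h2 : q k = 2 := le_antisymm (hq k).2 (not_lt.1 hlt)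
      have hQ₁ : ¬(1 ≤ q k ∧ q k < 2) := fun h => hlt h.2
      rw [if_neg hQ₁, if_neg hQ₁, if_pos h2, hw_two k h2, h2]
      ring
  rw [sum_mulVec_mul_eq_sum_mul_transpose_mulVec] at hfit
  simp only [Finset.sum_add_distrib, ← Finset.mul_sum]
  unfold Gfun
  linarith

lemma Gfun_sub_Gfun_eq_of_mul_eq (hq : ∀ k, 1 ≤ q k ∧ q k ≤ 2) (a w : Fin N → ℝ)
    (hw_two : ∀ k, q k = 2 → w k = 1) (ε : ℝ) (x y : Fin N → ℝ)
    (hy : ∀ k, (1 + lam k * q k * w k) * y k = a k - (Aᵀ *ᵥ (A *ᵥ a - b)) k) :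
    Gfun A b lam q x a w ε - Gfun A b lam q y a w ε
      = ∑ k, (1 + lam k * q k * w k) * (x k - y k) ^ 2 := by
  obtain ⟨C, hC⟩ := Gfun_eq_sum_add_const A b lam q hq a w hw_two ε
  rw [hC x, hC y, add_sub_add_right_eq_sub, ← Finset.sum_sub_distrib]
  exact Finset.sum_congr rfl fun k _ => by linear_combination (2 * (x k - y k)) * hy k

lemma one_sub_specNorm_sq_mul_sum_sq_le_Gfun_self_sub (hlam : ∀ k, 0 ≤ lam k)
    (hq : ∀ k, 1 ≤ q k ∧ q k ≤ 2) (x w : Fin N → ℝ) (hw : ∀ k, 0 ≤ w k)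
    (hw_two : ∀ k, q k = 2 → w k = 1) (ε : ℝ)
    (x' : Fin N → ℝ) (hx' : ∀ k, x' k = (1 + lam k * q k * w k)⁻¹
      * (x k + (Aᵀ *ᵥ b) k - (Aᵀ *ᵥ (A *ᵥ x)) k)) :
    (1 - specNorm A ^ 2) * ∑ k, (x k - x' k) ^ 2
      ≤ Gfun A b lam q x x w ε - Gfun A b lam q x' x' w ε := by
  have hc : ∀ k, 1 ≤ 1 + lam k * q k * w k := fun k => by
    have := mul_nonneg (mul_nonneg (hlam k) (zero_le_one.trans (hq k).1)) (hw k)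
    linarith
  have hx'_mul : ∀ k, (1 + lam k * q k * w k) * x' k = x k - (Aᵀ *ᵥ (A *ᵥ x - b)) k := by
    intro k
    rw [hx' k, mul_inv_cancel_left₀ (zero_lt_one.trans_le (hc k)).ne', Matrix.mulVec_sub,
      Pi.sub_apply]
    ring
  have hmin := Gfun_sub_Gfun_eq_of_mul_eq A b lam q hq x w hw_two ε x x' hx'_mul
  have hshift := Gfun_eq_Gfun_self_sub_add A b lam q x' x w ε
  have hA := sum_mulVec_sq_le_specNorm_sq_mul A (x' - x)
  have hsymm : ∑ k, (x' k - x k) ^ 2 = ∑ k, (x k - x' k) ^ 2 :=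
    Finset.sum_congr rfl fun k _ => by ring
  have hmono : ∑ k, (x k - x' k) ^ 2 ≤ ∑ k, (1 + lam k * q k * w k) * (x k - x' k) ^ 2 :=
    Finset.sum_le_sum fun k _ => le_mul_of_one_le_left (sq_nonneg _) (hc k)
  have hnonneg : 0 ≤ ∑ k, (x k - x' k) ^ 2 := Finset.sum_nonneg fun k _ => sq_nonneg _
  simp only [Pi.sub_apply] at hA
  rw [hsymm] at hA hshift
  nlinarith

lemma Gfun_le_of_weight_eq_rpow (hlam : ∀ k, 0 ≤ lam k) (x a w : Fin N → ℝ)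
    (hw : ∀ k, 0 < w k) {ε ε' : ℝ} (hε' : 0 < ε') (hε'ε : ε' ≤ ε) (w' : Fin N → ℝ)
    (hw' : ∀ k, w' k = (x k ^ 2 + ε' ^ 2) ^ ((q k - 2) / 2)) :
    Gfun A b lam q x a w' ε' ≤ Gfun A b lam q x a w ε := by
  have hs : ∀ k, x k ^ 2 + ε' ^ 2 ≤ x k ^ 2 + ε ^ 2 := fun k => by
    have := pow_le_pow_left₀ hε'.le hε'ε 2
    linarith
  have hQ₁ : ∑ k ∈ univ.filter (fun k => 1 ≤ q k ∧ q k < 2),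
        lam k * (q k * w' k * (x k ^ 2 + ε' ^ 2) + (2 - q k) * w' k ^ (q k / (q k - 2)))
      ≤ ∑ k ∈ univ.filter (fun k => 1 ≤ q k ∧ q k < 2),
        lam k * (q k * w k * (x k ^ 2 + ε ^ 2) + (2 - q k) * w k ^ (q k / (q k - 2))) := by
    refine Finset.sum_le_sum fun k hk => mul_le_mul_of_nonneg_left ?_ (hlam k)
    obtain ⟨hq1, hq2⟩ := (Finset.mem_filter.1 hk).2
    rw [hw' k, mul_rpow_sub_two_div_two_add_eq (q k) hq2.ne (by positivity)]
    calc 2 * (x k ^ 2 + ε' ^ 2) ^ (q k / 2) ≤ 2 * (x k ^ 2 + ε ^ 2) ^ (q k / 2) := by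
          gcongr
      _ ≤ _ := two_mul_rpow_le_mul_add_rpow (by linarith) hq2 (by positivity) (hw k)
  have hQ₂ : ∑ k ∈ univ.filter (fun k => q k = 2),
        2 * lam k * (x k ^ 2 + ε' ^ 2) * (w' k ^ 2 - 2 * w' k + 2)
      ≤ ∑ k ∈ univ.filter (fun k => q k = 2),
        2 * lam k * (x k ^ 2 + ε ^ 2) * (w k ^ 2 - 2 * w k + 2) := by
    refine Finset.sum_le_sum fun k hk => ?_
    have hw'1 : w' k = 1 := by rw [hw' k, (Finset.mem_filter.1 hk).2]; norm_num
    have hw1 : 1 ≤ w k ^ 2 - 2 * w k + 2 := by nlinarith [sq_nonneg (w k - 1)]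
    rw [hw'1]
    calc 2 * lam k * (x k ^ 2 + ε' ^ 2) * (1 ^ 2 - 2 * 1 + 2)
        = 2 * lam k * (x k ^ 2 + ε' ^ 2) * 1 := by norm_num
      _ ≤ 2 * lam k * (x k ^ 2 + ε ^ 2) * (w k ^ 2 - 2 * w k + 2) :=
        mul_le_mul (mul_le_mul_of_nonneg_left (hs k) (by linarith [hlam k])) hw1 zero_le_one
          (mul_nonneg (by linarith [hlam k]) (by positivity))
  unfold Gfun
  linarith

end Surrogate

lemma summable_and_mul_tsum_le_of_mul_le_sub_succ {f g : ℕ → ℝ} {c : ℝ} (hc : 0 < c)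
    (hf : ∀ n, 0 ≤ f n) (hg : ∀ n, 0 ≤ g n) (hfg : ∀ n, c * f n ≤ g n - g (n + 1)) :
    Summable f ∧ c * ∑' n, f n ≤ g 0 := by
  have hpartial : ∀ K, ∑ n ∈ range K, c * f n ≤ g 0 := fun K => by
    have := Finset.sum_le_sum fun n (_ : n ∈ range K) => hfg n
    rw [Finset.sum_range_sub'] at this
    linarith [hg K]
  have hsum : Summable f := summable_of_sum_range_le hf fun K => by
    rw [le_div_iff₀' hc, Finset.mul_sum]
    exact hpartial K
  refine ⟨hsum, ?_⟩
  rw [← tsum_mul_left]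
  exact (hsum.mul_left c).tsum_le_of_sum_range_le hpartial

theorem stmt_9_general {M N : ℕ} (A : Matrix (Fin M) (Fin N) ℝ) (hA : specNorm A < 1)
    (b : Fin M → ℝ) (lam q : Fin N → ℝ)
    (hlam : ∀ k, 0 < lam k) (hq : ∀ k, 1 ≤ q k ∧ q k ≤ 2)
    (x : ℕ → Fin N → ℝ) (eps : ℕ → ℝ) (w : ℕ → Fin N → ℝ)
    (α : ℝ) (hα0 : 0 < α) (heps0 : 0 < eps 0)
    (hw : ∀ n k, w n k = ((x n k) ^ 2 + (eps n) ^ 2) ^ ((q k - 2) / 2))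
    (hxiter : ∀ n k, x (n + 1) k =
      (1 + lam k * q k * w n k)⁻¹
        * (x n k + Aᵀ.mulVec b k - Aᵀ.mulVec (A.mulVec (x n)) k))
    (hepsiter : ∀ n, eps (n + 1) =
      min (eps n) (Real.sqrt (l2 (x (n + 1) - x n) + α ^ (n + 1)))) :
    (Summable fun n : ℕ => ∑ k, (x (n + 1) k - x (n + 2) k) ^ 2) ∧
    (1 - specNorm A ^ 2) * (∑' n : ℕ, ∑ k, (x (n + 1) k - x (n + 2) k) ^ 2)
      ≤ Gfun A b lam q (x 1) (x 1) (w 1) (eps 1) ∧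
    Tendsto (fun n => l2 (x n - x (n + 1))) atTop (nhds 0) := by
  have heps : ∀ n, 0 < eps n := by
    intro n
    induction n with
    | zero => exact heps0
    | succ n ih =>
      rw [hepsiter n]
      exact lt_min ih (Real.sqrt_pos.2 (add_pos_of_nonneg_of_pos (Real.sqrt_nonneg _)
        (pow_pos hα0 _)))
  have hw_pos : ∀ n k, 0 < w n k := fun n k => by
    rw [hw n k]
    exact Real.rpow_pos_of_pos (add_pos_of_nonneg_of_pos (sq_nonneg _) (pow_pos (heps n) 2)) _
  have hw_two : ∀ n k, q k = 2 → w n k = 1 := fun n k h => by rw [hw n k, h]; norm_num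
  have hlam0 : ∀ k, 0 ≤ lam k := fun k => (hlam k).le
  have hdecr : ∀ n, (1 - specNorm A ^ 2) * ∑ k, (x (n + 1) k - x (n + 2) k) ^ 2
      ≤ Gfun A b lam q (x (n + 1)) (x (n + 1)) (w (n + 1)) (eps (n + 1))
        - Gfun A b lam q (x (n + 2)) (x (n + 2)) (w (n + 2)) (eps (n + 2)) := fun n => by
    have hstep := one_sub_specNorm_sq_mul_sum_sq_le_Gfun_self_sub A b lam q hlam0 hq (x (n + 1))
      (w (n + 1)) (fun k => (hw_pos _ k).le) (hw_two _) (eps (n + 1)) _ (hxiter _)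
    have hweight := Gfun_le_of_weight_eq_rpow A b lam q hlam0 (x (n + 2)) (x (n + 2)) _
      (hw_pos (n + 1)) (heps (n + 2)) (hepsiter _ ▸ min_le_left _ _) _ (hw _)
    linarith
  obtain ⟨hsum, htsum⟩ := summable_and_mul_tsum_le_of_mul_le_sub_succ
    (sub_pos.2 (pow_lt_one₀ (norm_nonneg _) hA two_ne_zero))
    (fun n => Finset.sum_nonneg fun k _ => sq_nonneg _)
    (fun n => Gfun_self_nonneg A b lam q hlam0 _ _ (fun k => (hw_pos _ k).le) _) hdecr
  refine ⟨hsum, htsum, (tendsto_add_atTop_iff_nat 1).1 ?_⟩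
  simpa [l2] using hsum.tendsto_atTop_zero.sqrt

/-- if `‖A‖₂ < 1`, the successive differences of the IRLS iterates
are square-summable, with
`(1 - ‖A‖₂²) ∑_{n≥1} ‖xⁿ - x^{n+1}‖₂² ≤ G(x¹,x¹,w¹,ε₁)`;
in particular `‖xⁿ - x^{n+1}‖₂ → 0`. -/
theorem stmt_9 {M N : ℕ} (A : Matrix (Fin M) (Fin N) ℝ) (hA : specNorm A < 1)
    (b : Fin M → ℝ) (lam q : Fin N → ℝ)
    (hlam : ∀ k, 0 < lam k) (hq : ∀ k, 1 ≤ q k ∧ q k ≤ 2)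
    (x : ℕ → Fin N → ℝ) (eps : ℕ → ℝ) (w : ℕ → Fin N → ℝ)
    (α : ℝ) (hα0 : 0 < α) (hα1 : α < 1) (heps0 : 0 < eps 0)
    (hw : ∀ n k, w n k = ((x n k) ^ 2 + (eps n) ^ 2) ^ ((q k - 2) / 2))
    (hxiter : ∀ n k, x (n + 1) k =
      (1 + lam k * q k * w n k)⁻¹
        * (x n k + Aᵀ.mulVec b k - Aᵀ.mulVec (A.mulVec (x n)) k))
    (hepsiter : ∀ n, eps (n + 1) =
      min (eps n) (Real.sqrt (l2 (x (n + 1) - x n) + α ^ (n + 1)))) :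
    (Summable fun n : ℕ => ∑ k, (x (n + 1) k - x (n + 2) k) ^ 2) ∧
    (1 - specNorm A ^ 2) * (∑' n : ℕ, ∑ k, (x (n + 1) k - x (n + 2) k) ^ 2)
      ≤ Gfun A b lam q (x 1) (x 1) (w 1) (eps 1) ∧
    Tendsto (fun n => l2 (x n - x (n + 1))) atTop (nhds 0) :=
  stmt_9_general A hA b lam q hlam hq x eps w α hα0 heps0 hw hxiter hepsiter
end

section
/- Assume ‖A‖₂ < 1. Then the IRLS iterates are uniformly bounded in ℓ¹-norm: for every n ≥ 1, ‖x^n‖₁ ≤ N · max_{k ∈ {1,…,N}} ( G(x¹, x¹, w¹, ε₁) / λ_k )^{1/q_k}. -/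
open Finset Filter Matrix Topology

/-!
Write `J(x, ε) = ‖Ax - b‖₂² + 2 ∑ₖ λₖ (xₖ² + ε²)^{qₖ/2}`. One IRLS step does not increase `J`:
`J(xⁿ⁺¹, εₙ₊₁) ≤ J(xⁿ⁺¹, εₙ) ≤ G(xⁿ⁺¹, xⁿ⁺¹, wⁿ, εₙ) ≤ G(xⁿ⁺¹, xⁿ, wⁿ, εₙ) ≤ G(xⁿ, xⁿ, wⁿ, εₙ)
= J(xⁿ, εₙ)`. The first inequality is monotonicity in `ε`; the second is weighted AM–GM, which
also shows that `G(x, x, ·, ε)` attains `J(x, ε)` at `w = (x² + ε²)^{(q-2)/2}`, whence the final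
equality; the third is `‖A‖₂ ≤ 1`; the fourth holds because `G(·, xⁿ, wⁿ, εₙ)` is a separable
quadratic minimized by `xⁿ⁺¹`. Hence `λₖ |xₖⁿ|^{qₖ} ≤ J(xⁿ, εₙ) ≤ J(x¹, ε₁) = G(x¹, x¹, w¹, ε₁)`
for all `n ≥ 1`, and summing the resulting coordinate bounds gives the `ℓ¹` estimate.
-/

section Residual

variable {M N : ℕ} (A : Matrix (Fin M) (Fin N) ℝ)

lemma sum_sq_mulVec_le_of_specNorm_le_one (hA : specNorm A ≤ 1) (v : Fin N → ℝ) :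
    ∑ i, (A *ᵥ v) i ^ 2 ≤ ∑ k, v k ^ 2 := by
  have hnorm := (LinearMap.toContinuousLinearMap (toEuclideanLin A)).le_of_opNorm_le hA
    (WithLp.toLp 2 v)
  rw [one_mul, LinearMap.coe_toContinuousLinearMap', toLpLin_toLp, toLin'_apply] at hnorm
  have hsq := pow_le_pow_left₀ (norm_nonneg _) hnorm 2
  simpa only [EuclideanSpace.real_norm_sq_eq] using hsq

lemma sum_sq_mulVec_sub_sub_sum_sq_mulVec_sub (b : Fin M → ℝ) (x a : Fin N → ℝ) :
    (∑ i, ((A *ᵥ x) i - b i) ^ 2) - ∑ i, (A *ᵥ (x - a)) i ^ 2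
      = (∑ i, ((A *ᵥ a) i - b i) ^ 2) + 2 * ∑ k, (x k - a k) * (Aᵀ *ᵥ (A *ᵥ a - b)) k := by
  have hcross : ∑ k, (x k - a k) * (Aᵀ *ᵥ (A *ᵥ a - b)) k
      = ∑ i, ((A *ᵥ x) i - (A *ᵥ a) i) * ((A *ᵥ a) i - b i) := by
    have h := dotProduct_mulVec (x - a) Aᵀ (A *ᵥ a - b)
    rw [vecMul_transpose] at h
    simpa only [dotProduct, Pi.sub_apply, mulVec_sub] using h
  rw [hcross, mul_sum, ← sum_add_distrib, ← sum_sub_distrib]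
  refine sum_congr rfl fun i _ => ?_
  rw [mulVec_sub, Pi.sub_apply]
  ring

end Residual

/-- The `k`-th penalty summand of `G`, as a function of `s = x_k² + ε²`. -/
noncomputable def surrogatePenalty (l q w s : ℝ) : ℝ :=
  if q < 2 then l * (q * w * s + (2 - q) * w ^ (q / (q - 2)))
  else 2 * l * s * (w ^ 2 - 2 * w + 2)

section SurrogatePenalty

variable {l q w s : ℝ}

lemma two_mul_rpow_le_surrogatePenalty (hl : 0 ≤ l) (hq0 : 0 ≤ q) (hq2 : q ≤ 2)
    (hw : 0 < w) (hs : 0 ≤ s) : 2 * l * s ^ (q / 2) ≤ surrogatePenalty l q w s := by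
  unfold surrogatePenalty
  split_ifs with hq
  · -- weighted AM–GM for `w s` and `w^{q/(q-2)}` with weights `q/2` and `(2-q)/2`
    have amgm := Real.geom_mean_le_arith_mean2_weighted (by positivity : 0 ≤ q / 2)
      (by linarith : 0 ≤ (2 - q) / 2) (by positivity : 0 ≤ w * s)
      (Real.rpow_nonneg hw.le (q / (q - 2))) (by ring)
    have hgm : (w * s) ^ (q / 2) * (w ^ (q / (q - 2))) ^ ((2 - q) / 2) = s ^ (q / 2) := by
      have hexp : q / (q - 2) * ((2 - q) / 2) = -(q / 2) := by
        field_simp [(by linarith : q - 2 ≠ 0)]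
        ring
      rw [Real.mul_rpow hw.le hs, ← Real.rpow_mul hw.le, hexp, mul_right_comm,
        ← Real.rpow_add hw, add_neg_cancel, Real.rpow_zero, one_mul]
    rw [hgm] at amgm
    nlinarith
  · obtain rfl : q = 2 := by linarith
    rw [div_self two_ne_zero, Real.rpow_one]
    nlinarith [mul_nonneg (mul_nonneg hl hs) (sq_nonneg (w - 1))]

lemma surrogatePenalty_rpow_weight (hq2 : q ≤ 2) (hs : 0 < s) :
    surrogatePenalty l q (s ^ ((q - 2) / 2)) s = 2 * l * s ^ (q / 2) := by
  unfold surrogatePenalty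
  split_ifs with hq
  · have hws : s ^ ((q - 2) / 2) * s = s ^ (q / 2) := by
      rw [← Real.rpow_add_one hs.ne']
      ring_nf
    have hww : (s ^ ((q - 2) / 2)) ^ (q / (q - 2)) = s ^ (q / 2) := by
      rw [← Real.rpow_mul hs.le]
      congr 1
      field_simp [(by linarith : q - 2 ≠ 0)]
    rw [mul_assoc q, hws, hww]
    ring
  · obtain rfl : q = 2 := by linarith
    norm_num

lemma surrogatePenalty_sub_surrogatePenalty (hq2 : q ≤ 2) (hw : q = 2 → w = 1) (s' : ℝ) :
    surrogatePenalty l q w s - surrogatePenalty l q w s' = l * q * w * (s - s') := by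
  unfold surrogatePenalty
  split_ifs with hq
  · ring
  · obtain rfl : q = 2 := by linarith
    rw [hw rfl]
    ring

end SurrogatePenalty

noncomputable def Jfun {M N : ℕ} (A : Matrix (Fin M) (Fin N) ℝ) (b : Fin M → ℝ)
    (lam q : Fin N → ℝ) (x : Fin N → ℝ) (ε : ℝ) : ℝ :=
  (∑ i, ((A *ᵥ x) i - b i) ^ 2) + 2 * ∑ k, lam k * (x k ^ 2 + ε ^ 2) ^ (q k / 2)

section Surrogate

variable {M N : ℕ} (A : Matrix (Fin M) (Fin N) ℝ) (b : Fin M → ℝ) {lam q : Fin N → ℝ}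

lemma Gfun_eq_sum_surrogatePenalty (hq : ∀ k, 1 ≤ q k ∧ q k ≤ 2) (x a w : Fin N → ℝ) (ε : ℝ) :
    Gfun A b lam q x a w ε = (∑ i, ((A *ᵥ x) i - b i) ^ 2) - (∑ i, (A *ᵥ (x - a)) i ^ 2)
      + (∑ k, (x k - a k) ^ 2)
      + ∑ k, surrogatePenalty (lam k) (q k) (w k) (x k ^ 2 + ε ^ 2) := by
  rw [Gfun, add_assoc, sum_filter, sum_filter, ← sum_add_distrib]
  congr 1
  refine sum_congr rfl fun k _ => ?_
  unfold surrogatePenalty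
  by_cases hk : q k < 2
  · simp [hk, hk.ne, (hq k).1]
  · have hk2 : q k = 2 := le_antisymm (hq k).2 (not_lt.mp hk)
    simp [hk2]

lemma Gfun_self (hq : ∀ k, 1 ≤ q k ∧ q k ≤ 2) (x w : Fin N → ℝ) (ε : ℝ) :
    Gfun A b lam q x x w ε = (∑ i, ((A *ᵥ x) i - b i) ^ 2)
      + ∑ k, surrogatePenalty (lam k) (q k) (w k) (x k ^ 2 + ε ^ 2) := by
  simp [Gfun_eq_sum_surrogatePenalty A b hq]

lemma Jfun_le_Jfun_of_sq_le (hlam : ∀ k, 0 ≤ lam k) (hq : ∀ k, 0 ≤ q k) (x : Fin N → ℝ)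
    {ε ε' : ℝ} (hεε : ε' ^ 2 ≤ ε ^ 2) : Jfun A b lam q x ε' ≤ Jfun A b lam q x ε := by
  unfold Jfun
  gcongr with k
  exacts [hlam k, div_nonneg (hq k) zero_le_two]

lemma Jfun_le_Gfun_self (hlam : ∀ k, 0 ≤ lam k) (hq : ∀ k, 1 ≤ q k ∧ q k ≤ 2)
    (x : Fin N → ℝ) {w : Fin N → ℝ} (hw : ∀ k, 0 < w k) (ε : ℝ) :
    Jfun A b lam q x ε ≤ Gfun A b lam q x x w ε := by
  rw [Gfun_self A b hq, Jfun, mul_sum]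
  gcongr with k
  rw [← mul_assoc]
  exact two_mul_rpow_le_surrogatePenalty (hlam k) (by linarith [(hq k).1]) (hq k).2 (hw k)
    (by positivity)

lemma Gfun_self_eq_Jfun (hq : ∀ k, 1 ≤ q k ∧ q k ≤ 2) (x : Fin N → ℝ) {ε : ℝ} (hε : ε ≠ 0)
    {w : Fin N → ℝ} (hw : ∀ k, w k = (x k ^ 2 + ε ^ 2) ^ ((q k - 2) / 2)) :
    Gfun A b lam q x x w ε = Jfun A b lam q x ε := by
  rw [Gfun_self A b hq, Jfun, mul_sum]
  congr 1
  refine sum_congr rfl fun k _ => ?_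
  rw [hw k, surrogatePenalty_rpow_weight (hq k).2 (by positivity), mul_assoc]

lemma Gfun_self_le_Gfun (hA : specNorm A ≤ 1) (hq : ∀ k, 1 ≤ q k ∧ q k ≤ 2)
    (x a w : Fin N → ℝ) (ε : ℝ) : Gfun A b lam q x x w ε ≤ Gfun A b lam q x a w ε := by
  rw [Gfun_self A b hq, Gfun_eq_sum_surrogatePenalty A b hq]
  have := sum_sq_mulVec_le_of_specNorm_le_one A hA (x - a)
  simp only [Pi.sub_apply] at this
  linarith

lemma Gfun_update_le_Gfun_self (hlam : ∀ k, 0 ≤ lam k) (hq : ∀ k, 1 ≤ q k ∧ q k ≤ 2)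
    {x a w : Fin N → ℝ} (hw : ∀ k, 0 < w k) (hw_one : ∀ k, q k = 2 → w k = 1)
    (hx : ∀ k, x k = (1 + lam k * q k * w k)⁻¹ * (a k + (Aᵀ *ᵥ b) k - (Aᵀ *ᵥ (A *ᵥ a)) k))
    (ε : ℝ) : Gfun A b lam q x a w ε ≤ Gfun A b lam q a a w ε := by
  rw [Gfun_eq_sum_surrogatePenalty A b hq, Gfun_self A b hq,
    sum_sq_mulVec_sub_sub_sum_sq_mulVec_sub, mul_sum]
  suffices h : ∑ k, (2 * ((x k - a k) * (Aᵀ *ᵥ (A *ᵥ a - b)) k) + (x k - a k) ^ 2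
      + (surrogatePenalty (lam k) (q k) (w k) (x k ^ 2 + ε ^ 2)
        - surrogatePenalty (lam k) (q k) (w k) (a k ^ 2 + ε ^ 2))) ≤ 0 by
    simp only [sum_add_distrib, sum_sub_distrib] at h
    linarith
  refine sum_nonpos fun k _ => ?_
  set c := lam k * q k * w k
  have hc : 0 ≤ c := mul_nonneg (mul_nonneg (hlam k) (by linarith [(hq k).1])) (hw k).le
  have hgrad : (Aᵀ *ᵥ (A *ᵥ a - b)) k = a k - (1 + c) * x k := by
    rw [hx k, mul_inv_cancel_left₀ (by positivity), mulVec_sub, Pi.sub_apply]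
    ring
  rw [hgrad, surrogatePenalty_sub_surrogatePenalty (hq k).2 (hw_one k)]
  -- the summand equals `-(1 + c) (x_k - a_k)²`
  nlinarith [mul_nonneg (by positivity : 0 ≤ 1 + c) (sq_nonneg (x k - a k))]

lemma Jfun_update_le (hA : specNorm A ≤ 1) (hlam : ∀ k, 0 ≤ lam k)
    (hq : ∀ k, 1 ≤ q k ∧ q k ≤ 2) {a x w : Fin N → ℝ} {ε ε' : ℝ} (hε : 0 < ε) (hε' : 0 ≤ ε')
    (hεε : ε' ≤ ε) (hw : ∀ k, w k = (a k ^ 2 + ε ^ 2) ^ ((q k - 2) / 2))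
    (hx : ∀ k, x k = (1 + lam k * q k * w k)⁻¹ * (a k + (Aᵀ *ᵥ b) k - (Aᵀ *ᵥ (A *ᵥ a)) k)) :
    Jfun A b lam q x ε' ≤ Jfun A b lam q a ε := by
  have hw_pos : ∀ k, 0 < w k := fun k => hw k ▸ Real.rpow_pos_of_pos (by positivity) _
  have hw_one : ∀ k, q k = 2 → w k = 1 := fun k hk => by rw [hw k, hk]; norm_num
  calc Jfun A b lam q x ε'
      ≤ Jfun A b lam q x ε :=
        Jfun_le_Jfun_of_sq_le A b hlam (fun k => by linarith [(hq k).1]) x (by nlinarith)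
    _ ≤ Gfun A b lam q x x w ε := Jfun_le_Gfun_self A b hlam hq x hw_pos ε
    _ ≤ Gfun A b lam q x a w ε := Gfun_self_le_Gfun A b hA hq x a w ε
    _ ≤ Gfun A b lam q a a w ε := Gfun_update_le_Gfun_self A b hlam hq hw_pos hw_one hx ε
    _ = Jfun A b lam q a ε := Gfun_self_eq_Jfun A b hq a hε.ne' hw

lemma lam_mul_abs_rpow_le_Jfun (hlam : ∀ k, 0 ≤ lam k) (hq : ∀ k, 0 ≤ q k) (x : Fin N → ℝ)
    (ε : ℝ) (k : Fin N) : lam k * |x k| ^ q k ≤ Jfun A b lam q x ε := by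
  have hterm : ∀ j, 0 ≤ lam j * (x j ^ 2 + ε ^ 2) ^ (q j / 2) := fun j =>
    mul_nonneg (hlam j) (by positivity)
  have habs : |x k| ^ q k = (x k ^ 2) ^ (q k / 2) := by
    rw [← sq_abs, ← Real.rpow_natCast, ← Real.rpow_mul (abs_nonneg _)]
    congr 1
    push_cast
    ring
  calc lam k * |x k| ^ q k
      ≤ lam k * (x k ^ 2 + ε ^ 2) ^ (q k / 2) := by
        rw [habs]
        gcongr
        · exact hlam k
        · linarith [hq k]
        · nlinarith
    _ ≤ ∑ j, lam j * (x j ^ 2 + ε ^ 2) ^ (q j / 2) :=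
        single_le_sum (fun j _ => hterm j) (mem_univ k)
    _ ≤ Jfun A b lam q x ε := by
        have := sum_nonneg fun j (_ : j ∈ univ) => hterm j
        have := sum_nonneg fun i (_ : i ∈ univ) => sq_nonneg ((A *ᵥ x) i - b i)
        rw [Jfun]
        linarith

end Surrogate

lemma abs_le_rpow_one_div_of_mul_abs_rpow_le {l p t C : ℝ} (hl : 0 < l) (hp : 0 < p)
    (h : l * |t| ^ p ≤ C) : |t| ≤ (C / l) ^ (1 / p) := by
  have hC : 0 ≤ C := (mul_nonneg hl.le (by positivity)).trans h
  rw [one_div, Real.le_rpow_inv_iff_of_pos (abs_nonneg t) (div_nonneg hC hl.le) hp,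
    le_div_iff₀ hl, mul_comm]
  exact h

theorem stmt_10_general {M N : ℕ} (A : Matrix (Fin M) (Fin N) ℝ) (hA : specNorm A < 1)
    (b : Fin M → ℝ) (lam q : Fin N → ℝ)
    (hlam : ∀ k, 0 < lam k) (hq : ∀ k, 1 ≤ q k ∧ q k ≤ 2)
    (x : ℕ → Fin N → ℝ) (eps : ℕ → ℝ) (w : ℕ → Fin N → ℝ)
    (α : ℝ) (hα0 : 0 < α) (heps0 : 0 < eps 0)
    (hw : ∀ n k, w n k = ((x n k) ^ 2 + (eps n) ^ 2) ^ ((q k - 2) / 2))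
    (hxiter : ∀ n k, x (n + 1) k =
      (1 + lam k * q k * w n k)⁻¹
        * (x n k + Aᵀ.mulVec b k - Aᵀ.mulVec (A.mulVec (x n)) k))
    (hepsiter : ∀ n, eps (n + 1) =
      min (eps n) (Real.sqrt (l2 (x (n + 1) - x n) + α ^ (n + 1)))) :
    ∀ n : ℕ, 1 ≤ n →
      (∑ k, |x n k|)
        ≤ (N : ℝ) *
          ⨆ k : Fin N,
            (Gfun A b lam q (x 1) (x 1) (w 1) (eps 1) / lam k) ^ (1 / q k) := by
  have hlam_nonneg : ∀ k, 0 ≤ lam k := fun k => (hlam k).le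
  have hq_nonneg : ∀ k, 0 ≤ q k := fun k => zero_le_one.trans (hq k).1
  have heps_pos : ∀ n, 0 < eps n := by
    intro n
    induction n with
    | zero => exact heps0
    | succ n ih =>
      rw [hepsiter n]
      exact lt_min ih (Real.sqrt_pos.2 (add_pos_of_nonneg_of_pos (Real.sqrt_nonneg _)
        (pow_pos hα0 _)))
  have hdescent : ∀ n, 1 ≤ n → Jfun A b lam q (x n) (eps n) ≤ Jfun A b lam q (x 1) (eps 1) := by
    intro n hn
    induction n, hn using Nat.le_induction with
    | base => rfl
    | succ n _ ih =>
      refine (Jfun_update_le A b hA.le hlam_nonneg hq (heps_pos n)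
        (heps_pos (n + 1)).le ?_ (hw n) (hxiter n)).trans ih
      rw [hepsiter n]
      exact min_le_left _ _
  rw [Gfun_self_eq_Jfun A b hq (x 1) (heps_pos 1).ne' (hw 1)]
  intro n hn
  set J₁ := Jfun A b lam q (x 1) (eps 1)
  have hcoord : ∀ k, |x n k| ≤ (J₁ / lam k) ^ (1 / q k) := fun k =>
    abs_le_rpow_one_div_of_mul_abs_rpow_le (hlam k) (by linarith [(hq k).1])
      ((lam_mul_abs_rpow_le_Jfun A b hlam_nonneg hq_nonneg (x n) (eps n) k).trans
        (hdescent n hn))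
  calc ∑ k, |x n k|
      ≤ #univ • ⨆ j, (J₁ / lam j) ^ (1 / q j) := sum_le_card_nsmul _ _ _ fun k _ =>
        (hcoord k).trans (le_ciSup (f := fun j => (J₁ / lam j) ^ (1 / q j))
          (Set.finite_range _).bddAbove k)
    _ = _ := by rw [card_univ, Fintype.card_fin, nsmul_eq_mul]

/-- if `‖A‖₂ < 1`, the IRLS iterates are uniformly bounded in the
ℓ¹-norm: for every `n ≥ 1`,
`‖xⁿ‖₁ ≤ N · max_k (G(x¹,x¹,w¹,ε₁)/λₖ)^{1/qₖ}`. -/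
theorem stmt_10 {M N : ℕ} (A : Matrix (Fin M) (Fin N) ℝ) (hA : specNorm A < 1)
    (b : Fin M → ℝ) (lam q : Fin N → ℝ)
    (hlam : ∀ k, 0 < lam k) (hq : ∀ k, 1 ≤ q k ∧ q k ≤ 2)
    (x : ℕ → Fin N → ℝ) (eps : ℕ → ℝ) (w : ℕ → Fin N → ℝ)
    (α : ℝ) (hα0 : 0 < α) (hα1 : α < 1) (heps0 : 0 < eps 0)
    (hw : ∀ n k, w n k = ((x n k) ^ 2 + (eps n) ^ 2) ^ ((q k - 2) / 2))
    (hxiter : ∀ n k, x (n + 1) k =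
      (1 + lam k * q k * w n k)⁻¹
        * (x n k + Aᵀ.mulVec b k - Aᵀ.mulVec (A.mulVec (x n)) k))
    (hepsiter : ∀ n, eps (n + 1) =
      min (eps n) (Real.sqrt (l2 (x (n + 1) - x n) + α ^ (n + 1)))) :
    ∀ n : ℕ, 1 ≤ n →
      (∑ k, |x n k|)
        ≤ (N : ℝ) *
          ⨆ k : Fin N,
            (Gfun A b lam q (x 1) (x 1) (w 1) (eps 1) / lam k) ^ (1 / q k) :=
  stmt_10_general A hA b lam q hlam hq x eps w α hα0 heps0 hw hxiter hepsiter
end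

section
/- Suppose ‖x^{n+1} − x^n‖₂ → 0 and that a subsequence {x^{n_r}} of the IRLS iterates converges to some x̄ ∈ ℝ^N. Then for every k ∈ {1,…,N}, the rescaled weighted iterates converge: λ_k q_k w^{n_r}_k x^{n_r + 1}_k → (Aᵀ(b − A x̄))_k as r → ∞. -/
open Finset Filter Matrix Topology

/-- if `‖x^{n+1} - xⁿ‖₂ → 0` and a subsequence `x^{n_r} → x̄`, then
for every `k`, `λₖ qₖ w^{n_r}ₖ x^{n_r + 1}ₖ → (Aᵀ(b - A x̄))ₖ`. -/
theorem stmt_12 {M N : ℕ} (A : Matrix (Fin M) (Fin N) ℝ) (b : Fin M → ℝ)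
    (lam q : Fin N → ℝ)
    (hlam : ∀ k, 0 < lam k) (hq : ∀ k, 1 ≤ q k ∧ q k ≤ 2)
    (x : ℕ → Fin N → ℝ) (eps : ℕ → ℝ) (w : ℕ → Fin N → ℝ)
    (α : ℝ) (hα0 : 0 < α) (hα1 : α < 1) (heps0 : 0 < eps 0)
    (hw : ∀ n k, w n k = ((x n k) ^ 2 + (eps n) ^ 2) ^ ((q k - 2) / 2))
    (hxiter : ∀ n k, x (n + 1) k =
      (1 + lam k * q k * w n k)⁻¹
        * (x n k + Aᵀ.mulVec b k - Aᵀ.mulVec (A.mulVec (x n)) k))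
    (hepsiter : ∀ n, eps (n + 1) =
      min (eps n) (Real.sqrt (l2 (x (n + 1) - x n) + α ^ (n + 1))))
    (hdiff : Tendsto (fun n => l2 (x (n + 1) - x n)) atTop (nhds 0))
    (r : ℕ → ℕ) (hr : StrictMono r) (xbar : Fin N → ℝ)
    (hconv : Tendsto (fun j => x (r j)) atTop (nhds xbar)) :
    ∀ k : Fin N,
      Tendsto (fun j => lam k * q k * w (r j) k * x (r j + 1) k)
        atTop (nhds (Aᵀ.mulVec (b - A.mulVec xbar) k)) := by
  intro k
  have hwnn : ∀ n, 0 ≤ w n k := by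
    intro n; rw [hw]; exact Real.rpow_nonneg (by positivity) _
  have hpos : ∀ n, (0:ℝ) < 1 + lam k * q k * w n k := by
    intro n
    have h1 := (hq k).1
    have h2 := hlam k
    have h3 := hwnn n
    have h4 : 0 ≤ lam k * q k * w n k :=
      mul_nonneg (mul_nonneg h2.le (by linarith)) h3
    linarith
  have key : ∀ n, lam k * q k * w n k * x (n + 1) k
      = (x n k - x (n + 1) k) + Aᵀ.mulVec b k - Aᵀ.mulVec (A.mulVec (x n)) k := by
    intro n
    have hne := (hpos n).ne'
    have h : (1 + lam k * q k * w n k) * x (n + 1) k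
        = x n k + Aᵀ.mulVec b k - Aᵀ.mulVec (A.mulVec (x n)) k := by
      rw [hxiter n k]; field_simp
    nlinarith [h]
  have hl2 : ∀ (v : Fin N → ℝ), |v k| ≤ l2 v := by
    intro v
    rw [l2, ← Real.sqrt_sq_eq_abs]
    exact Real.sqrt_le_sqrt (Finset.single_le_sum (fun i _ => sq_nonneg (v i))
      (Finset.mem_univ k))
  have hB : Tendsto (fun j => x (r j) k - x (r j + 1) k) atTop (nhds 0) := by
    refine squeeze_zero_norm (fun j => ?_) (hdiff.comp hr.tendsto_atTop)
    have := hl2 (x (r j + 1) - x (r j))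
    simpa [Real.norm_eq_abs, abs_sub_comm] using this
  have hA : Tendsto (fun j => x (r j) k) atTop (nhds (xbar k)) :=
    ((continuous_apply k).tendsto xbar).comp hconv
  have hC : Tendsto (fun j => Aᵀ.mulVec (A.mulVec (x (r j))) k) atTop
      (nhds (Aᵀ.mulVec (A.mulVec xbar) k)) := by
    have hcont : Continuous (fun v : Fin N → ℝ => Aᵀ.mulVec (A.mulVec v) k) := by
      simp only [Matrix.mulVec, dotProduct]
      fun_prop
    exact (hcont.tendsto xbar).comp hconv
  have hgoal : Tendsto (fun j => (x (r j) k - x (r j + 1) k) + Aᵀ.mulVec b k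
      - Aᵀ.mulVec (A.mulVec (x (r j))) k) atTop
      (nhds (0 + Aᵀ.mulVec b k - Aᵀ.mulVec (A.mulVec xbar) k)) :=
    (hB.add tendsto_const_nhds).sub hC
  have hrhs : Aᵀ.mulVec (b - A.mulVec xbar) k
      = 0 + Aᵀ.mulVec b k - Aᵀ.mulVec (A.mulVec xbar) k := by
    rw [Matrix.mulVec_sub]; simp
  rw [hrhs]
  exact hgoal.congr (fun j => (key (r j)).symm)
end

section
/- Assume ‖A‖₂ < 1. Let n₁ < n₂ < … be indices along which ε_{n_l} = ( ‖x^{n_l} − x^{n_l − 1}‖₂ + α^{n_l} )^{1/2} < ε_{n_l − 1}, and suppose a further subsequence {x^{n_{l_r}}} of the IRLS iterates converges to x̄ ∈ ℝ^N. Then x̄ satisfies the optimality conditions of F: for every k, if x̄_k ≠ 0 then (Aᵀ(b − A x̄))_k = λ_k q_k sgn(x̄_k) |x̄_k|^{q_k − 1}; if x̄_k = 0 and q_k = 1 then |(Aᵀ(b − A x̄))_k| ≤ λ_k; and if x̄_k = 0 and q_k > 1 then (Aᵀ(b − A x̄))_k = 0. In particular x̄ minimizes F. -/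
open Finset Filter Matrix Topology

lemma specNorm_nonneg {M N : ℕ} (A : Matrix (Fin M) (Fin N) ℝ) : 0 ≤ specNorm A :=
  norm_nonneg _

lemma opnorm_bound {M N : ℕ} (A : Matrix (Fin M) (Fin N) ℝ) (v : Fin N → ℝ) :
    ∑ i, (A.mulVec v i) ^ 2 ≤ specNorm A ^ 2 * ∑ k, (v k) ^ 2 := by
  set T := LinearMap.toContinuousLinearMap (Matrix.toEuclideanLin A) with hT
  have hv : ∀ (u : EuclideanSpace ℝ (Fin N)), ‖T u‖ ≤ ‖T‖ * ‖u‖ := T.le_opNorm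
  set u : EuclideanSpace ℝ (Fin N) := (WithLp.equiv 2 (Fin N → ℝ)).symm v with hu
  have h1 : ‖T u‖ ^ 2 ≤ (‖T‖ * ‖u‖) ^ 2 := by
    have := hv u
    nlinarith [norm_nonneg (T u)]
  have hTu : T u = (WithLp.equiv 2 (Fin M → ℝ)).symm (A.mulVec v) := by
    simp [hT, hu, Matrix.toEuclideanLin_apply]
  have hnu : ‖u‖ ^ 2 = ∑ k, (v k) ^ 2 := by
    rw [EuclideanSpace.norm_eq]
    rw [Real.sq_sqrt (by positivity)]
    simp [hu, sq_abs]
  have hnTu : ‖T u‖ ^ 2 = ∑ i, (A.mulVec v i) ^ 2 := by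
    rw [hTu, EuclideanSpace.norm_eq]
    rw [Real.sq_sqrt (by positivity)]
    simp [sq_abs]
  calc ∑ i, (A.mulVec v i) ^ 2 = ‖T u‖ ^ 2 := hnTu.symm
    _ ≤ (‖T‖ * ‖u‖) ^ 2 := h1
    _ = specNorm A ^ 2 * ∑ k, (v k) ^ 2 := by rw [mul_pow, hnu, specNorm]

-- S1: concavity inequality
lemma concave_ineq {s t qq : ℝ} (hs : 0 < s) (ht : 0 < t) (hq1 : 1 ≤ qq) (hq2 : qq ≤ 2) :
    2 * t ^ (qq / 2) ≤ qq * s ^ ((qq - 2) / 2) * t + (2 - qq) * s ^ (qq / 2) := by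
  set p := qq / 2 with hp
  have hp1 : 0 ≤ p := by positivity
  have hp2 : p ≤ 1 := by rw [hp]; linarith
  have hu : (0:ℝ) < t / s := by positivity
  have key : (t / s) ^ p ≤ 1 + p * (t / s - 1) := by
    have := rpow_one_add_le_one_add_mul_self (s := t / s - 1) (by linarith) hp1 hp2
    simpa using this
  have hsp : (0:ℝ) < s ^ p := Real.rpow_pos_of_pos hs p
  have hts : t ^ p = s ^ p * (t / s) ^ p := by
    rw [← Real.mul_rpow (le_of_lt hs) (le_of_lt hu)]
    rw [mul_div_cancel₀ _ (ne_of_gt hs)]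
  have hsp1 : s ^ p * (t / s) = s ^ (p - 1) * t := by
    rw [Real.rpow_sub hs, Real.rpow_one]
    field_simp
  have h2 : t ^ p ≤ s ^ p + p * (s ^ (p - 1) * t) - p * s ^ p := by
    calc t ^ p = s ^ p * (t / s) ^ p := hts
      _ ≤ s ^ p * (1 + p * (t / s - 1)) := by nlinarith
      _ = s ^ p + p * (s ^ p * (t / s)) - p * s ^ p := by ring
      _ = s ^ p + p * (s ^ (p - 1) * t) - p * s ^ p := by rw [hsp1]
  have hexp : p - 1 = (qq - 2) / 2 := by rw [hp]; ring
  rw [hexp] at h2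
  have : qq * s ^ ((qq - 2)/2) * t = 2 * (p * (s ^ ((qq-2)/2) * t)) := by rw [hp]; ring
  rw [this]
  have h3 : (2 - qq) * s ^ p = 2 * (s ^ p - p * s ^ p) := by rw [hp]; ring
  rw [h3]
  linarith

-- S2: quadratic identity
lemma quad_ident {β c u x' : ℝ} (hβ : 0 ≤ β) (hx' : x' = (1 + β)⁻¹ * c) :
    (1 + β) * u ^ 2 - 2 * u * c = (1 + β) * x' ^ 2 - 2 * x' * c + (1 + β) * (u - x') ^ 2 := by
  have h1 : (1 + β) ≠ 0 := by positivity
  have hc : c = (1 + β) * x' := by rw [hx']; field_simp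
  rw [hc]; ring

lemma transp_sum {M N : ℕ} (A : Matrix (Fin M) (Fin N) ℝ) (x : Fin N → ℝ) (u : Fin M → ℝ) :
    ∑ k, x k * Aᵀ.mulVec u k = ∑ i, A.mulVec x i * u i := by
  have h1 : x ⬝ᵥ (Aᵀ *ᵥ u) = (x ᵥ* Aᵀ) ⬝ᵥ u := Matrix.dotProduct_mulVec x Aᵀ u
  have h2 : x ᵥ* Aᵀ = A *ᵥ x := Matrix.vecMul_transpose A x
  rw [h2] at h1
  simpa [dotProduct] using h1

lemma expand_ident {M N : ℕ} (A : Matrix (Fin M) (Fin N) ℝ) (b : Fin M → ℝ)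
    (a x : Fin N → ℝ) :
    (∑ i, (A.mulVec x i - b i) ^ 2) - (∑ i, (A.mulVec (x - a) i) ^ 2)
      + ∑ k, (x k - a k) ^ 2
    = (∑ k, ((x k) ^ 2
        - 2 * x k * (a k + Aᵀ.mulVec b k - Aᵀ.mulVec (A.mulVec a) k)))
      + ((∑ i, (b i) ^ 2) - (∑ i, (A.mulVec a i) ^ 2) + ∑ k, (a k) ^ 2) := by
  have hsub : ∀ i, A.mulVec (x - a) i = A.mulVec x i - A.mulVec a i := by
    intro i; rw [Matrix.mulVec_sub]; rfl
  have e1 : (∑ i, (A.mulVec x i - b i) ^ 2) - (∑ i, (A.mulVec (x - a) i) ^ 2)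
      = ∑ i, ((b i) ^ 2 - (A.mulVec a i) ^ 2
          - 2 * (A.mulVec x i * b i) + 2 * (A.mulVec x i * A.mulVec a i)) := by
    rw [← Finset.sum_sub_distrib]
    apply Finset.sum_congr rfl
    intro i _
    rw [hsub i]; ring
  have e2 : ∑ k, (x k - a k) ^ 2 = ∑ k, ((x k) ^ 2 - 2 * (x k * a k) + (a k) ^ 2) := by
    apply Finset.sum_congr rfl; intro k _; ring
  rw [e1, e2]
  have e3 : ∑ k, ((x k) ^ 2
        - 2 * x k * (a k + Aᵀ.mulVec b k - Aᵀ.mulVec (A.mulVec a) k))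
      = (∑ k, (x k) ^ 2) - 2 * (∑ k, x k * a k) - 2 * (∑ k, x k * Aᵀ.mulVec b k)
        + 2 * (∑ k, x k * Aᵀ.mulVec (A.mulVec a) k) := by
    simp only [Finset.mul_sum, ← Finset.sum_sub_distrib, ← Finset.sum_add_distrib]
    apply Finset.sum_congr rfl; intro k _; ring
  rw [e3, transp_sum A x b, transp_sum A x (A.mulVec a)]
  simp only [Finset.sum_add_distrib, Finset.sum_sub_distrib, Finset.mul_sum]
  ring

lemma step_decrease {M N : ℕ} (A : Matrix (Fin M) (Fin N) ℝ) (hA : specNorm A ≤ 1)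
    (b : Fin M → ℝ) (lam q : Fin N → ℝ) (hlam : ∀ k, 0 ≤ lam k)
    (hq : ∀ k, 1 ≤ q k ∧ q k ≤ 2) (ε ε' : ℝ) (hε : 0 < ε) (hε' : 0 ≤ ε') (hee : ε' ≤ ε)
    (a w x' : Fin N → ℝ)
    (hw : ∀ k, w k = ((a k) ^ 2 + ε ^ 2) ^ ((q k - 2) / 2))
    (hx' : ∀ k, x' k = (1 + lam k * q k * w k)⁻¹
        * (a k + Aᵀ.mulVec b k - Aᵀ.mulVec (A.mulVec a) k)) :
    (∑ i, (A.mulVec x' i - b i) ^ 2)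
      + 2 * ∑ k, lam k * ((x' k) ^ 2 + ε' ^ 2) ^ (q k / 2)
      + ∑ k, (x' k - a k) ^ 2
    ≤ (∑ i, (A.mulVec a i - b i) ^ 2)
      + 2 * ∑ k, lam k * ((a k) ^ 2 + ε ^ 2) ^ (q k / 2) := by
  have hspos : ∀ k, (0:ℝ) < (a k) ^ 2 + ε ^ 2 := fun k => by positivity
  have hwpos : ∀ k, 0 < w k := by
    intro k; rw [hw k]; exact Real.rpow_pos_of_pos (hspos k) _
  have hβ : ∀ k, 0 ≤ lam k * q k * w k := by
    intro k
    have h1 := (hq k).1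
    have h2 := hlam k
    have h3 := (hwpos k).le
    positivity
  -- (1) quadratic minimization summed
  have hsum : ∑ k, ((1 + lam k * q k * w k) * (a k) ^ 2
        - 2 * (a k) * (a k + Aᵀ.mulVec b k - Aᵀ.mulVec (A.mulVec a) k))
      = (∑ k, ((1 + lam k * q k * w k) * (x' k) ^ 2
          - 2 * (x' k) * (a k + Aᵀ.mulVec b k - Aᵀ.mulVec (A.mulVec a) k)))
        + ∑ k, (1 + lam k * q k * w k) * (a k - x' k) ^ 2 := by
    rw [← Finset.sum_add_distrib]
    apply Finset.sum_congr rfl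
    intro k _
    exact quad_ident (hβ k) (hx' k)
  have hΔ : ∑ k, (x' k - a k) ^ 2
      ≤ ∑ k, (1 + lam k * q k * w k) * (a k - x' k) ^ 2 := by
    apply Finset.sum_le_sum
    intro k _
    nlinarith [hβ k, sq_nonneg (a k - x' k)]
  have hEx : ∀ x : Fin N → ℝ,
      (∑ i, (A.mulVec x i - b i) ^ 2) - (∑ i, (A.mulVec (x - a) i) ^ 2)
        + (∑ k, (x k - a k) ^ 2) + ∑ k, (lam k * q k * w k) * (x k) ^ 2
      = (∑ k, ((1 + lam k * q k * w k) * (x k) ^ 2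
          - 2 * (x k) * (a k + Aᵀ.mulVec b k - Aᵀ.mulVec (A.mulVec a) k)))
        + ((∑ i, (b i) ^ 2) - (∑ i, (A.mulVec a i) ^ 2) + ∑ k, (a k) ^ 2) := by
    intro x
    have h0 := expand_ident A b a x
    have e : ∑ k, ((1 + lam k * q k * w k) * (x k) ^ 2
          - 2 * (x k) * (a k + Aᵀ.mulVec b k - Aᵀ.mulVec (A.mulVec a) k))
        = (∑ k, ((x k) ^ 2 - 2 * x k
            * (a k + Aᵀ.mulVec b k - Aᵀ.mulVec (A.mulVec a) k)))
          + ∑ k, (lam k * q k * w k) * (x k) ^ 2 := by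
      rw [← Finset.sum_add_distrib]
      apply Finset.sum_congr rfl
      intro k _
      ring
    rw [e]
    linarith
  have hPa : (∑ i, (A.mulVec (a - a) i) ^ 2) = 0 := by simp [sub_self]
  have hka : (∑ k, (a k - a k) ^ 2) = 0 := by simp
  have hAΔ : (∑ i, (A.mulVec (x' - a) i) ^ 2) ≤ ∑ k, (x' k - a k) ^ 2 := by
    have h1 := opnorm_bound A (x' - a)
    have h2 : specNorm A ^ 2 ≤ 1 := by nlinarith [specNorm_nonneg A]
    have h3 : (0:ℝ) ≤ ∑ k, (x' k - a k) ^ 2 :=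
      Finset.sum_nonneg fun k _ => sq_nonneg _
    have h4 : ∑ k, ((x' - a) k) ^ 2 = ∑ k, (x' k - a k) ^ 2 := rfl
    rw [h4] at h1
    nlinarith
  have hstar : (∑ i, (A.mulVec x' i - b i) ^ 2)
      + (∑ k, (lam k * q k * w k) * (x' k) ^ 2)
      + ∑ k, (x' k - a k) ^ 2
      ≤ (∑ i, (A.mulVec a i - b i) ^ 2)
        + ∑ k, (lam k * q k * w k) * (a k) ^ 2 := by
    have h1 := hEx a
    have h2 := hEx x'
    rw [hPa, hka] at h1
    linarith
  -- (3) rpow algebra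
  have hrpow : ∀ k, w k * ((a k) ^ 2 + ε ^ 2)
      = ((a k) ^ 2 + ε ^ 2) ^ (q k / 2) := by
    intro k
    rw [hw k, ← Real.rpow_add_one (ne_of_gt (hspos k)) ((q k - 2) / 2)]
    congr 1
    ring
  have hrB : ∀ k, (lam k * q k * w k) * (a k) ^ 2
      + lam k * (q k * w k * ε ^ 2
        + (2 - q k) * ((a k) ^ 2 + ε ^ 2) ^ (q k / 2))
      = 2 * lam k * ((a k) ^ 2 + ε ^ 2) ^ (q k / 2) := by
    intro k
    linear_combination (lam k * q k) * hrpow k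
  have hrL : ∀ k, 2 * lam k * ((x' k) ^ 2 + ε ^ 2) ^ (q k / 2)
      ≤ (lam k * q k * w k) * (x' k) ^ 2
        + lam k * (q k * w k * ε ^ 2
          + (2 - q k) * ((a k) ^ 2 + ε ^ 2) ^ (q k / 2)) := by
    intro k
    have ht : (0:ℝ) < (x' k) ^ 2 + ε ^ 2 := by positivity
    have h1 := concave_ineq (hspos k) ht (hq k).1 (hq k).2
    rw [← hw k] at h1
    have h2 := hlam k
    nlinarith
  -- (4) eps monotonicity
  have S1 : ∑ k, lam k * ((x' k) ^ 2 + ε' ^ 2) ^ (q k / 2)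
      ≤ ∑ k, lam k * ((x' k) ^ 2 + ε ^ 2) ^ (q k / 2) := by
    apply Finset.sum_le_sum
    intro k _
    apply mul_le_mul_of_nonneg_left _ (hlam k)
    apply Real.rpow_le_rpow (by positivity) _ (by linarith [(hq k).1])
    nlinarith
  have S2 : ∑ k, 2 * lam k * ((x' k) ^ 2 + ε ^ 2) ^ (q k / 2)
      ≤ (∑ k, (lam k * q k * w k) * (x' k) ^ 2)
        + ∑ k, lam k * (q k * w k * ε ^ 2
            + (2 - q k) * ((a k) ^ 2 + ε ^ 2) ^ (q k / 2)) := by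
    rw [← Finset.sum_add_distrib]
    exact Finset.sum_le_sum fun k _ => hrL k
  have S3 : (∑ k, (lam k * q k * w k) * (a k) ^ 2)
      + ∑ k, lam k * (q k * w k * ε ^ 2
          + (2 - q k) * ((a k) ^ 2 + ε ^ 2) ^ (q k / 2))
      = ∑ k, 2 * lam k * ((a k) ^ 2 + ε ^ 2) ^ (q k / 2) := by
    rw [← Finset.sum_add_distrib]
    exact Finset.sum_congr rfl fun k _ => hrB k
  have e2 : (2:ℝ) * ∑ k, lam k * ((x' k) ^ 2 + ε ^ 2) ^ (q k / 2)
      = ∑ k, 2 * lam k * ((x' k) ^ 2 + ε ^ 2) ^ (q k / 2) := by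
    rw [Finset.mul_sum]; exact Finset.sum_congr rfl fun k _ => by ring
  have e3 : (2:ℝ) * ∑ k, lam k * ((a k) ^ 2 + ε ^ 2) ^ (q k / 2)
      = ∑ k, 2 * lam k * ((a k) ^ 2 + ε ^ 2) ^ (q k / 2) := by
    rw [Finset.mul_sum]; exact Finset.sum_congr rfl fun k _ => by ring
  linarith

-- Bernoulli-based subgradient for t ↦ t^q on [0,∞) at aa > 0
lemma rpow_subgrad_nonneg {aa t qq : ℝ} (ha : 0 < aa) (ht : 0 ≤ t) (hq1 : 1 ≤ qq) :
    aa ^ qq + qq * aa ^ (qq - 1) * (t - aa) ≤ t ^ qq := by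
  have hu : -1 ≤ t / aa - 1 := by
    have : 0 ≤ t / aa := by positivity
    linarith
  have key := one_add_mul_self_le_rpow_one_add hu hq1
  have h1 : (1 + (t / aa - 1)) = t / aa := by ring
  rw [h1] at key
  have hap : (0:ℝ) < aa ^ qq := Real.rpow_pos_of_pos ha qq
  have h2 : (t / aa) ^ qq = t ^ qq / aa ^ qq := Real.div_rpow ht ha.le qq
  rw [h2] at key
  have h3 : aa ^ qq * (1 + qq * (t / aa - 1)) ≤ t ^ qq := by
    calc aa ^ qq * (1 + qq * (t / aa - 1)) ≤ aa ^ qq * (t ^ qq / aa ^ qq) :=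
          mul_le_mul_of_nonneg_left key hap.le
      _ = t ^ qq := by field_simp
  have h4 : aa ^ (qq - 1) = aa ^ qq / aa := by
    rw [Real.rpow_sub ha, Real.rpow_one]
  calc aa ^ qq + qq * aa ^ (qq - 1) * (t - aa)
      = aa ^ qq * (1 + qq * (t / aa - 1)) := by
        rw [h4]; field_simp
    _ ≤ t ^ qq := h3

-- general subgradient of |·|^q at a ≠ 0
lemma abs_rpow_subgrad {a y qq : ℝ} (ha : a ≠ 0) (hq1 : 1 ≤ qq) :
    |a| ^ qq + qq * Real.sign a * |a| ^ (qq - 1) * (y - a) ≤ |y| ^ qq := by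
  have haa : (0:ℝ) < |a| := abs_pos.mpr ha
  have hsz : Real.sign a * (y - a) = Real.sign a * y - |a| := by
    have h1 : Real.sign a * a = |a| := by
      rcases lt_or_gt_of_ne ha with h | h
      · rw [Real.sign_of_neg h, abs_of_neg h]; ring
      · rw [Real.sign_of_pos h, abs_of_pos h]; ring
    rw [mul_sub, h1]
  have hz : Real.sign a * y ≤ |y| := by
    rcases lt_or_gt_of_ne ha with h | h
    · rw [Real.sign_of_neg h]; rw [neg_mul, one_mul] at *; linarith [neg_abs_le y]
    · rw [Real.sign_of_pos h, one_mul]; exact le_abs_self y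
  have key := rpow_subgrad_nonneg haa (abs_nonneg y) hq1
  have hcoef : (0:ℝ) ≤ qq * |a| ^ (qq - 1) := by
    have := Real.rpow_pos_of_pos haa (qq - 1)
    nlinarith
  calc |a| ^ qq + qq * Real.sign a * |a| ^ (qq - 1) * (y - a)
      = |a| ^ qq + qq * |a| ^ (qq - 1) * (Real.sign a * y - |a|) := by
        rw [← hsz]; ring
    _ ≤ |a| ^ qq + qq * |a| ^ (qq - 1) * (|y| - |a|) := by nlinarith
    _ ≤ |y| ^ qq := key

lemma minimality {M N : ℕ} (A : Matrix (Fin M) (Fin N) ℝ) (b : Fin M → ℝ)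
    (lam q : Fin N → ℝ) (hlam : ∀ k, 0 < lam k) (hq : ∀ k, 1 ≤ q k ∧ q k ≤ 2)
    (xbar : Fin N → ℝ)
    (hopt : ∀ k : Fin N,
      (xbar k ≠ 0 →
        Aᵀ.mulVec (b - A.mulVec xbar) k
          = lam k * q k * Real.sign (xbar k) * |xbar k| ^ (q k - 1)) ∧
      (xbar k = 0 → q k = 1 → |Aᵀ.mulVec (b - A.mulVec xbar) k| ≤ lam k) ∧
      (xbar k = 0 → 1 < q k → Aᵀ.mulVec (b - A.mulVec xbar) k = 0)) :
    ∀ y : Fin N → ℝ, Ffun A b lam q xbar ≤ Ffun A b lam q y := by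
  intro y
  set g : Fin N → ℝ := fun k => Aᵀ.mulVec (b - A.mulVec xbar) k with hg
  have hgk : ∀ k, g k = Aᵀ.mulVec (b - A.mulVec xbar) k := fun k => rfl
  set d : Fin N → ℝ := fun k => y k - xbar k with hd
  -- quadratic part
  have hAy : ∀ i, A.mulVec y i = A.mulVec xbar i + A.mulVec d i := by
    intro i
    have : y = xbar + d := by funext k; simp [hd]
    rw [this, Matrix.mulVec_add]
    rfl
  have hcross : ∑ k, d k * g k = ∑ i, A.mulVec d i * (b i - A.mulVec xbar i) := by
    have := transp_sum A d (b - A.mulVec xbar)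
    rw [hg]
    convert this using 2 <;> rfl
  have hquad : (∑ i, (A.mulVec xbar i - b i) ^ 2) - 2 * ∑ k, d k * g k
      ≤ ∑ i, (A.mulVec y i - b i) ^ 2 := by
    rw [hcross]
    have e1 : ∑ i, (A.mulVec y i - b i) ^ 2
        = ∑ i, ((A.mulVec xbar i - b i) ^ 2
            + 2 * (A.mulVec d i * (A.mulVec xbar i - b i)) + (A.mulVec d i) ^ 2) := by
      apply Finset.sum_congr rfl
      intro i _
      rw [hAy i]; ring
    rw [e1]
    simp only [Finset.sum_add_distrib, Finset.mul_sum]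
    have h2 : (0:ℝ) ≤ ∑ i, (A.mulVec d i) ^ 2 :=
      Finset.sum_nonneg fun i _ => sq_nonneg _
    have h3 : ∀ i, A.mulVec d i * (b i - A.mulVec xbar i)
        = -(A.mulVec d i * (A.mulVec xbar i - b i)) := by intro i; ring
    have h5 : ∑ i, 2 * (A.mulVec d i * (b i - A.mulVec xbar i))
        = -∑ i, 2 * (A.mulVec d i * (A.mulVec xbar i - b i)) := by
      rw [← Finset.sum_neg_distrib]
      exact Finset.sum_congr rfl fun i _ => by ring
    linarith
  -- penalty part, coordinatewise
  have hpen : ∀ k, g k * d k ≤ lam k * |y k| ^ (q k) - lam k * |xbar k| ^ (q k) := by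
    intro k
    rcases eq_or_ne (xbar k) 0 with h0 | h0
    · have hx0 : |xbar k| ^ (q k) = 0 := by
        rw [h0, abs_zero, Real.zero_rpow (by linarith [(hq k).1])]
      rcases eq_or_lt_of_le (hq k).1 with hq1 | hq1
      · -- q k = 1
        have hb := (hopt k).2.1 h0 hq1.symm
        rw [← hgk k] at hb
        have : g k * d k ≤ lam k * |y k| := by
          calc g k * d k ≤ |g k * d k| := le_abs_self _
            _ = |g k| * |d k| := abs_mul _ _
            _ ≤ lam k * |d k| := by
                apply mul_le_mul_of_nonneg_right hb (abs_nonneg _)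
            _ = lam k * |y k| := by rw [hd]; simp [h0]
        rw [hx0, ← hq1, Real.rpow_one]
        linarith
      · -- 1 < q k
        have hb := (hopt k).2.2 h0 hq1
        rw [← hgk k] at hb
        rw [hb, hx0]
        have : (0:ℝ) ≤ lam k * |y k| ^ (q k) := by
          have := (hlam k).le
          have : (0:ℝ) ≤ |y k| ^ (q k) := Real.rpow_nonneg (abs_nonneg _) _
          positivity
        linarith
    · have hb := (hopt k).1 h0
      rw [← hgk k] at hb
      have key := abs_rpow_subgrad (a := xbar k) (y := y k) h0 (hq k).1
      have : g k * d k = lam k * (q k * Real.sign (xbar k) * |xbar k| ^ (q k - 1)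
          * (y k - xbar k)) := by
        rw [hb, hd]; ring
      rw [this]
      nlinarith [(hlam k).le, key]
  have hpen2 : ∑ k, g k * d k
      ≤ (∑ k, lam k * |y k| ^ (q k)) - ∑ k, lam k * |xbar k| ^ (q k) := by
    rw [← Finset.sum_sub_distrib]
    exact Finset.sum_le_sum fun k _ => hpen k
  have e5 : ∑ k, d k * g k = ∑ k, g k * d k :=
    Finset.sum_congr rfl fun k _ => mul_comm _ _
  rw [Ffun, Ffun]
  rw [e5] at hquad
  linarith

-- small rpow helper
lemma sq_rpow_helper {a e : ℝ} (ha : 0 ≤ a) : (a ^ 2) ^ e = a ^ (2 * e) := by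
  rw [← Real.rpow_natCast a 2, ← Real.rpow_mul ha]
  norm_num

/-- if `‖A‖₂ < 1` and along indices `n₁ < n₂ < ⋯` (all `≥ 1`) one
has `ε_{n_l} = (‖x^{n_l} - x^{n_l - 1}‖₂ + α^{n_l})^{1/2} < ε_{n_l - 1}`, and a
further subsequence `x^{n_{l_r}} → x̄`, then `x̄` satisfies the optimality
conditions of `F` and hence minimizes `F`. -/
theorem stmt_14 {M N : ℕ} (A : Matrix (Fin M) (Fin N) ℝ) (hA : specNorm A < 1)
    (b : Fin M → ℝ) (lam q : Fin N → ℝ)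
    (hlam : ∀ k, 0 < lam k) (hq : ∀ k, 1 ≤ q k ∧ q k ≤ 2)
    (x : ℕ → Fin N → ℝ) (eps : ℕ → ℝ) (w : ℕ → Fin N → ℝ)
    (α : ℝ) (hα0 : 0 < α) (hα1 : α < 1) (heps0 : 0 < eps 0)
    (hw : ∀ n k, w n k = ((x n k) ^ 2 + (eps n) ^ 2) ^ ((q k - 2) / 2))
    (hxiter : ∀ n k, x (n + 1) k =
      (1 + lam k * q k * w n k)⁻¹
        * (x n k + Aᵀ.mulVec b k - Aᵀ.mulVec (A.mulVec (x n)) k))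
    (hepsiter : ∀ n, eps (n + 1) =
      min (eps n) (Real.sqrt (l2 (x (n + 1) - x n) + α ^ (n + 1))))
    (nl : ℕ → ℕ) (hnl : StrictMono nl) (hnl1 : ∀ l, 1 ≤ nl l)
    (hepsnl : ∀ l, eps (nl l)
        = Real.sqrt (l2 (x (nl l) - x (nl l - 1)) + α ^ (nl l)) ∧
      eps (nl l) < eps (nl l - 1))
    (r : ℕ → ℕ) (hr : StrictMono r) (xbar : Fin N → ℝ)
    (hconv : Tendsto (fun j => x (nl (r j))) atTop (nhds xbar)) :
    (∀ k : Fin N,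
      (xbar k ≠ 0 →
        Aᵀ.mulVec (b - A.mulVec xbar) k
          = lam k * q k * Real.sign (xbar k) * |xbar k| ^ (q k - 1)) ∧
      (xbar k = 0 → q k = 1 → |Aᵀ.mulVec (b - A.mulVec xbar) k| ≤ lam k) ∧
      (xbar k = 0 → 1 < q k → Aᵀ.mulVec (b - A.mulVec xbar) k = 0)) ∧
    (∀ y : Fin N → ℝ, Ffun A b lam q xbar ≤ Ffun A b lam q y) := by
  have hq1 : ∀ k, 1 ≤ q k := fun k => (hq k).1
  -- positivity of eps
  have heps_pos : ∀ n, 0 < eps n := by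
    intro n
    induction n with
    | zero => exact heps0
    | succ p ih =>
      rw [hepsiter p]
      apply lt_min ih
      apply Real.sqrt_pos.mpr
      have h1 : (0:ℝ) ≤ l2 (x (p+1) - x p) := Real.sqrt_nonneg _
      have h2 : (0:ℝ) < α ^ (p+1) := pow_pos hα0 _
      linarith
  have heps_succ : ∀ n, eps (n+1) ≤ eps n := fun n => by
    rw [hepsiter n]; exact min_le_left _ _
  have heps_anti : Antitone eps := antitone_nat_of_succ_le heps_succ
  have hwpos : ∀ n k, 0 < w n k := fun n k => by
    rw [hw n k]
    exact Real.rpow_pos_of_pos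
      (by nlinarith [sq_nonneg (x n k), pow_pos (heps_pos n) 2]) _
  -- Lyapunov decrease
  set D : ℕ → ℝ := fun n => ∑ k, (x (n+1) k - x n k) ^ 2 with hD
  set Fe : ℕ → ℝ := fun n => (∑ i, (A.mulVec (x n) i - b i) ^ 2)
      + 2 * ∑ k, lam k * ((x n k) ^ 2 + (eps n) ^ 2) ^ (q k / 2) with hFe
  have hdec : ∀ n, Fe (n+1) + D n ≤ Fe n := by
    intro n
    have h := step_decrease A hA.le b lam q (fun k => (hlam k).le) hq
      (eps n) (eps (n+1)) (heps_pos n) (heps_pos (n+1)).le (heps_succ n)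
      (x n) (w n) (x (n+1)) (hw n) (hxiter n)
    simp only [hFe, hD]
    linarith
  have hD_nonneg : ∀ n, 0 ≤ D n := fun n => Finset.sum_nonneg fun k _ => sq_nonneg _
  have hFe_nonneg : ∀ n, 0 ≤ Fe n := by
    intro n
    have h1 : (0:ℝ) ≤ ∑ i, (A.mulVec (x n) i - b i) ^ 2 :=
      Finset.sum_nonneg fun i _ => sq_nonneg _
    have h2 : (0:ℝ) ≤ ∑ k, lam k * ((x n k) ^ 2 + (eps n) ^ 2) ^ (q k / 2) :=
      Finset.sum_nonneg fun k _ =>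
        mul_nonneg (hlam k).le (Real.rpow_nonneg (by positivity) _)
    simp only [hFe]
    linarith
  have hpartial : ∀ mm, (∑ n ∈ Finset.range mm, D n) ≤ Fe 0 := by
    have key : ∀ mm, Fe mm + ∑ n ∈ Finset.range mm, D n ≤ Fe 0 := by
      intro mm
      induction mm with
      | zero => simp
      | succ p ih =>
        rw [Finset.sum_range_succ]
        have := hdec p
        linarith
    intro mm
    linarith [key mm, hFe_nonneg mm]
  have hsummable : Summable D := summable_of_sum_range_le hD_nonneg hpartial
  have hD0 : Tendsto D atTop (𝓝 0) := hsummable.tendsto_atTop_zero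
  have hsqrtD0 : Tendsto (fun n => Real.sqrt (D n)) atTop (𝓝 0) := by
    have h2 : Tendsto (fun n => Real.sqrt (D n)) atTop (𝓝 (Real.sqrt 0)) :=
      (Real.continuous_sqrt.tendsto 0).comp hD0
    rwa [Real.sqrt_zero] at h2
  have hl2D : ∀ n, l2 (x (n+1) - x n) = Real.sqrt (D n) := fun n => rfl
  have hl2_0 : Tendsto (fun n => l2 (x (n+1) - x n)) atTop (𝓝 0) :=
    hsqrtD0.congr fun n => (hl2D n).symm
  have hdiff0 : ∀ k, Tendsto (fun n => x (n+1) k - x n k) atTop (𝓝 0) := by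
    intro k
    apply squeeze_zero_norm _ hsqrtD0
    intro n
    have h3 : (x (n+1) k - x n k) ^ 2 ≤ D n :=
      Finset.single_le_sum (f := fun kk => (x (n+1) kk - x n kk) ^ 2)
        (fun i _ => sq_nonneg _) (Finset.mem_univ k)
    calc ‖x (n+1) k - x n k‖ = Real.sqrt ((x (n+1) k - x n k) ^ 2) := by
          rw [Real.sqrt_sq_eq_abs]; rfl
      _ ≤ Real.sqrt (D n) := Real.sqrt_le_sqrt h3
  -- index machinery
  set m : ℕ → ℕ := fun j => nl (r j) with hm
  have hm_mono : StrictMono m := hnl.comp hr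
  have hm_pos : ∀ j, 0 < m j := fun j => hnl1 (r j)
  have hm_eq : ∀ j, m j - 1 + 1 = m j := fun j => Nat.succ_pred_eq_of_pos (hm_pos j)
  have hm_top : Tendsto m atTop atTop := hm_mono.tendsto_atTop
  have hm1_top : Tendsto (fun j => m j - 1) atTop atTop :=
    tendsto_atTop_mono (fun j => Nat.sub_le_sub_right hm_mono.le_apply 1)
      (tendsto_sub_atTop_nat 1)
  -- eps limits
  have hepsm_eq : ∀ j, eps (m j)
      = Real.sqrt (l2 (x (m j) - x (m j - 1)) + α ^ (m j)) := fun j => (hepsnl (r j)).1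
  have hl2m : Tendsto (fun j => l2 (x (m j) - x (m j - 1))) atTop (𝓝 0) := by
    have h := hl2_0.comp hm1_top
    apply h.congr
    intro j
    simp only [Function.comp_apply]
    rw [hm_eq j]
  have hαm : Tendsto (fun j => α ^ (m j)) atTop (𝓝 0) :=
    (tendsto_pow_atTop_nhds_zero_of_lt_one hα0.le hα1).comp hm_top
  have hepsm0 : Tendsto (fun j => eps (m j)) atTop (𝓝 0) := by
    have h1 : Tendsto (fun j => l2 (x (m j) - x (m j - 1)) + α ^ (m j)) atTop (𝓝 0) := by
      have := hl2m.add hαm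
      simpa using this
    have h2 := (Real.continuous_sqrt.tendsto 0).comp h1
    rw [Real.sqrt_zero] at h2
    exact h2.congr fun j => (hepsm_eq j).symm
  have heps_all0 : Tendsto eps atTop (𝓝 0) := by
    have hbdd : BddBelow (Set.range eps) := by
      refine ⟨0, ?_⟩
      rintro y ⟨n, rfl⟩
      exact (heps_pos n).le
    have h1 := tendsto_atTop_ciInf heps_anti hbdd
    have h2 := h1.comp hm_top
    have h3 := tendsto_nhds_unique h2 hepsm0
    rwa [h3] at h1
  have hepsm1_0 : Tendsto (fun j => eps (m j - 1)) atTop (𝓝 0) := heps_all0.comp hm1_top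
  -- coordinate limits
  have hxm : ∀ k, Tendsto (fun j => x (m j) k) atTop (𝓝 (xbar k)) := by
    intro k
    exact tendsto_pi_nhds.mp hconv k
  have hdm : ∀ k, Tendsto (fun j => x (m j) k - x (m j - 1) k) atTop (𝓝 0) := by
    intro k
    have h := (hdiff0 k).comp hm1_top
    apply h.congr
    intro j
    simp only [Function.comp_apply]
    rw [hm_eq j]
  have hxm1 : ∀ k, Tendsto (fun j => x (m j - 1) k) atTop (𝓝 (xbar k)) := by
    intro k
    have h1 := (hxm k).sub (hdm k)
    rw [sub_zero] at h1
    exact h1.congr fun j => by ring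
  -- iteration identity
  have hiter : ∀ p k, lam k * q k * w p k * x (p+1) k
      = (x p k - x (p+1) k) + Aᵀ.mulVec b k - Aᵀ.mulVec (A.mulVec (x p)) k := by
    intro p k
    have h1 := hxiter p k
    have hβ : (0:ℝ) < 1 + lam k * q k * w p k := by
      have h5 : 0 ≤ lam k * q k * w p k :=
        mul_nonneg (mul_nonneg (hlam k).le (by linarith [hq1 k])) (hwpos p k).le
      linarith
    have h2 : (1 + lam k * q k * w p k) * x (p+1) k
        = x p k + Aᵀ.mulVec b k - Aᵀ.mulVec (A.mulVec (x p)) k := by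
      rw [h1]
      field_simp
    linear_combination h2
  have hLR : ∀ k j, lam k * q k * w (m j - 1) k * x (m j) k
      = (x (m j - 1) k - x (m j) k) + Aᵀ.mulVec b k
        - Aᵀ.mulVec (A.mulVec (x (m j - 1))) k := by
    intro k j
    have h := hiter (m j - 1) k
    rwa [hm_eq j] at h
  -- limit of the right-hand side
  have hAterm : ∀ k, Tendsto (fun j => Aᵀ.mulVec (A.mulVec (x (m j - 1))) k) atTop
      (𝓝 (Aᵀ.mulVec (A.mulVec xbar) k)) := by
    intro k
    have hrw : ∀ v : Fin N → ℝ, Aᵀ.mulVec (A.mulVec v) k = ∑ jj, (Aᵀ * A) k jj * v jj := by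
      intro v
      rw [Matrix.mulVec_mulVec]
      simp [Matrix.mulVec, dotProduct]
    simp only [hrw]
    exact tendsto_finset_sum _ fun jj _ => tendsto_const_nhds.mul (hxm1 jj)
  have hgdef : ∀ k, Aᵀ.mulVec (b - A.mulVec xbar) k
      = Aᵀ.mulVec b k - Aᵀ.mulVec (A.mulVec xbar) k := by
    intro k
    rw [Matrix.mulVec_sub]
    rfl
  have hRHS : ∀ k, Tendsto (fun j => (x (m j - 1) k - x (m j) k) + Aᵀ.mulVec b k
      - Aᵀ.mulVec (A.mulVec (x (m j - 1))) k) atTop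
      (𝓝 (Aᵀ.mulVec (b - A.mulVec xbar) k)) := by
    intro k
    have h1 : Tendsto (fun j => x (m j - 1) k - x (m j) k) atTop (𝓝 0) := by
      have h2 := (hdm k).neg
      rw [neg_zero] at h2
      exact h2.congr fun j => by ring
    have h3 := (h1.add (tendsto_const_nhds (x := Aᵀ.mulVec b k))).sub (hAterm k)
    rw [hgdef k]
    have h4 : (0:ℝ) + Aᵀ.mulVec b k - Aᵀ.mulVec (A.mulVec xbar) k
        = Aᵀ.mulVec b k - Aᵀ.mulVec (A.mulVec xbar) k := by ring
    rwa [h4] at h3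
  -- basic bounds along the subsequence
  have hl2_le : ∀ j, l2 (x (m j) - x (m j - 1)) ≤ eps (m j) ^ 2 := by
    intro j
    have h0 : (0:ℝ) ≤ l2 (x (m j) - x (m j - 1)) := Real.sqrt_nonneg _
    have h1 : (0:ℝ) ≤ α ^ (m j) := pow_nonneg hα0.le _
    have h2 : eps (m j) ^ 2 = l2 (x (m j) - x (m j - 1)) + α ^ (m j) := by
      rw [hepsm_eq j, Real.sq_sqrt (by linarith)]
    linarith
  have habs_le_l2 : ∀ j k, |x (m j) k - x (m j - 1) k| ≤ l2 (x (m j) - x (m j - 1)) := by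
    intro j k
    have h3 : (x (m j) k - x (m j - 1) k) ^ 2
        ≤ ∑ kk, ((x (m j) - x (m j - 1)) kk) ^ 2 := by
      have := Finset.single_le_sum (f := fun kk => ((x (m j) - x (m j - 1)) kk) ^ 2)
        (fun i _ => sq_nonneg _) (Finset.mem_univ k)
      simpa using this
    calc |x (m j) k - x (m j - 1) k|
        = Real.sqrt ((x (m j) k - x (m j - 1) k) ^ 2) := (Real.sqrt_sq_eq_abs _).symm
      _ ≤ l2 (x (m j) - x (m j - 1)) := Real.sqrt_le_sqrt h3
  -- uniform bound for the weighted term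
  have hbound : ∀ j k, |lam k * q k * w (m j - 1) k * x (m j) k|
      ≤ lam k * q k * (((x (m j - 1) k) ^ 2 + eps (m j - 1) ^ 2) ^ ((q k - 1) / 2)
          + eps (m j) ^ (q k)) := by
    intro j k
    set p := m j - 1 with hp
    have hS : (0:ℝ) < (x p k) ^ 2 + eps p ^ 2 := by
      nlinarith [sq_nonneg (x p k), pow_pos (heps_pos p) 2]
    have hwv : w p k = ((x p k) ^ 2 + eps p ^ 2) ^ ((q k - 2) / 2) := hw p k
    have hwnn : 0 ≤ w p k := (hwpos p k).le
    -- |x p k| ≤ S^{1/2}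
    have hx_le : |x p k| ≤ ((x p k) ^ 2 + eps p ^ 2) ^ ((1:ℝ) / 2) := by
      rw [← Real.sqrt_eq_rpow]
      calc |x p k| = Real.sqrt ((x p k) ^ 2) := (Real.sqrt_sq_eq_abs _).symm
        _ ≤ Real.sqrt ((x p k) ^ 2 + eps p ^ 2) := Real.sqrt_le_sqrt (by nlinarith)
    have hwx : w p k * |x p k| ≤ ((x p k) ^ 2 + eps p ^ 2) ^ ((q k - 1) / 2) := by
      calc w p k * |x p k|
          ≤ w p k * (((x p k) ^ 2 + eps p ^ 2) ^ ((1:ℝ) / 2)) :=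
            mul_le_mul_of_nonneg_left hx_le hwnn
        _ = ((x p k) ^ 2 + eps p ^ 2) ^ ((q k - 1) / 2) := by
            rw [hwv, ← Real.rpow_add hS]
            congr 1
            ring
    -- w * |Δ| ≤ eps(mj)^q
    have hepsle : eps (m j) ≤ eps p := heps_anti (by omega)
    have hwle : w p k ≤ eps (m j) ^ (q k - 2) := by
      have h1 : w p k ≤ (eps p ^ 2) ^ ((q k - 2) / 2) := by
        rw [hwv]
        apply Real.rpow_le_rpow_of_nonpos (pow_pos (heps_pos p) 2) (by nlinarith [sq_nonneg (x p k)])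
        have := (hq k).2
        linarith
      have h2 : (eps p ^ 2) ^ ((q k - 2) / 2) = eps p ^ (q k - 2) := by
        rw [sq_rpow_helper (heps_pos p).le]
        congr 1
        ring
      have h3 : eps p ^ (q k - 2) ≤ eps (m j) ^ (q k - 2) := by
        apply Real.rpow_le_rpow_of_nonpos (heps_pos (m j)) hepsle
        have := (hq k).2
        linarith
      linarith [h1, h2 ▸ h1]
    have hΔle : |x (m j) k - x p k| ≤ eps (m j) ^ 2 :=
      le_trans (habs_le_l2 j k) (hl2_le j)
    have hwΔ : w p k * |x (m j) k - x p k| ≤ eps (m j) ^ (q k) := by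
      calc w p k * |x (m j) k - x p k|
          ≤ eps (m j) ^ (q k - 2) * (eps (m j) ^ 2) := by
            apply mul_le_mul hwle hΔle (abs_nonneg _)
            exact Real.rpow_nonneg (heps_pos (m j)).le _
        _ = eps (m j) ^ (q k) := by
            rw [← Real.rpow_natCast (eps (m j)) 2, ← Real.rpow_add (heps_pos (m j))]
            norm_num
    -- combine
    have htri : |x (m j) k| ≤ |x p k| + |x (m j) k - x p k| := by
      calc |x (m j) k| = |x p k + (x (m j) k - x p k)| := by ring_nf
        _ ≤ |x p k| + |x (m j) k - x p k| := abs_add_le _ _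
    have hlq : 0 ≤ lam k * q k :=
      mul_nonneg (hlam k).le (by linarith [hq1 k])
    calc |lam k * q k * w (m j - 1) k * x (m j) k|
        = lam k * q k * (w p k * |x (m j) k|) := by
          rw [abs_mul]
          rw [abs_of_nonneg (mul_nonneg hlq hwnn : (0:ℝ) ≤ lam k * q k * w p k)]
          ring
      _ ≤ lam k * q k * (w p k * (|x p k| + |x (m j) k - x p k|)) := by
          apply mul_le_mul_of_nonneg_left _ hlq
          exact mul_le_mul_of_nonneg_left htri hwnn
      _ ≤ lam k * q k * (((x p k) ^ 2 + eps p ^ 2) ^ ((q k - 1) / 2)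
            + eps (m j) ^ (q k)) := by
          apply mul_le_mul_of_nonneg_left _ hlq
          have := mul_add (w p k) (|x p k|) (|x (m j) k - x p k|)
          rw [this]
          exact add_le_add hwx hwΔ
  -- limit of S_j
  have hSlim : ∀ k, Tendsto (fun j => (x (m j - 1) k) ^ 2 + eps (m j - 1) ^ 2) atTop
      (𝓝 ((xbar k) ^ 2)) := by
    intro k
    have h1 := ((hxm1 k).pow 2).add (hepsm1_0.pow 2)
    have h2 : (0:ℝ) ^ 2 = 0 := by norm_num
    rw [h2, add_zero] at h1
    exact h1
  -- the optimality conditions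
  have hopt : ∀ k : Fin N,
      (xbar k ≠ 0 →
        Aᵀ.mulVec (b - A.mulVec xbar) k
          = lam k * q k * Real.sign (xbar k) * |xbar k| ^ (q k - 1)) ∧
      (xbar k = 0 → q k = 1 → |Aᵀ.mulVec (b - A.mulVec xbar) k| ≤ lam k) ∧
      (xbar k = 0 → 1 < q k → Aᵀ.mulVec (b - A.mulVec xbar) k = 0) := by
    intro k
    refine ⟨?_, ?_, ?_⟩
    · -- Case a : xbar k ≠ 0
      intro hne
      have habs0 : (0:ℝ) < |xbar k| := abs_pos.mpr hne
      have hsq : (0:ℝ) < (xbar k) ^ 2 := by nlinarith [sq_abs (xbar k)]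
      have hwlim : Tendsto (fun j => w (m j - 1) k) atTop
          (𝓝 (((xbar k) ^ 2) ^ ((q k - 2) / 2))) := by
        have hcont : ContinuousAt (fun t : ℝ => t ^ ((q k - 2) / 2)) ((xbar k) ^ 2) :=
          Real.continuousAt_rpow_const _ _ (Or.inl (ne_of_gt hsq))
        have h1 := hcont.tendsto.comp (hSlim k)
        apply h1.congr
        intro j
        simp only [Function.comp_apply]
        rw [hw (m j - 1) k]
      have hLHSlim : Tendsto (fun j => lam k * q k * w (m j - 1) k * x (m j) k) atTop
          (𝓝 (lam k * q k * ((xbar k) ^ 2) ^ ((q k - 2) / 2) * xbar k)) := by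
        exact (tendsto_const_nhds.mul hwlim).mul (hxm k)
      have hRHSlim := (hRHS k).congr fun j => (hLR k j).symm
      have huniq := tendsto_nhds_unique hRHSlim hLHSlim
      rw [huniq]
      -- algebra: (xbar²)^{(q-2)/2} * xbar = sign(xbar)|xbar|^{q-1}
      have habs : (0:ℝ) < |xbar k| := abs_pos.mpr hne
      have e1 : ((xbar k) ^ 2) ^ ((q k - 2) / 2) = |xbar k| ^ (q k - 2) := by
        rw [← sq_abs, sq_rpow_helper (abs_nonneg _)]
        congr 1
        ring
      have e2 : |xbar k| ^ (q k - 2) * xbar k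
          = Real.sign (xbar k) * |xbar k| ^ (q k - 1) := by
        have h4 : |xbar k| ^ (q k - 2) * |xbar k| = |xbar k| ^ (q k - 1) := by
          rw [← Real.rpow_add_one (ne_of_gt habs)]
          congr 1
          ring
        rcases lt_or_gt_of_ne hne with hlt | hgt
        · rw [Real.sign_of_neg hlt, abs_of_neg hlt] at *
          rw [← h4]
          ring
        · rw [Real.sign_of_pos hgt, abs_of_pos hgt] at *
          rw [← h4]
          ring
      rw [e1, mul_assoc (lam k * q k), e2]
      ring
    · -- Case b : xbar k = 0, q k = 1
      intro h0 hq1k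
      have hRHSlim := (hRHS k).congr fun j => (hLR k j).symm
      have habslim : Tendsto (fun j => |lam k * q k * w (m j - 1) k * x (m j) k|) atTop
          (𝓝 |Aᵀ.mulVec (b - A.mulVec xbar) k|) := hRHSlim.abs
      have hrpowS : Tendsto (fun j =>
          (((x (m j - 1) k) ^ 2 + eps (m j - 1) ^ 2) ^ ((q k - 1) / 2))) atTop (𝓝 1) := by
        have hz : (q k - 1) / 2 = 0 := by rw [hq1k]; ring
        apply tendsto_const_nhds.congr
        intro j
        rw [hz, Real.rpow_zero]
      have hepsq : Tendsto (fun j => eps (m j) ^ (q k)) atTop (𝓝 0) := by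
        apply hepsm0.congr
        intro j
        rw [hq1k, Real.rpow_one]
      have hboundlim : Tendsto (fun j => lam k * q k
          * (((x (m j - 1) k) ^ 2 + eps (m j - 1) ^ 2) ^ ((q k - 1) / 2)
              + eps (m j) ^ (q k))) atTop (𝓝 (lam k * q k * (1 + 0))) :=
        tendsto_const_nhds.mul (hrpowS.add hepsq)
      have hfin : |Aᵀ.mulVec (b - A.mulVec xbar) k| ≤ lam k * q k * (1 + 0) :=
        le_of_tendsto_of_tendsto' habslim hboundlim (fun j => hbound j k)
      rw [hq1k] at hfin
      simpa using hfin
    · -- Case c : xbar k = 0, 1 < q k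
      intro h0 hqgt
      have hRHSlim := (hRHS k).congr fun j => (hLR k j).symm
      have hS0 : Tendsto (fun j => (x (m j - 1) k) ^ 2 + eps (m j - 1) ^ 2) atTop
          (𝓝 0) := by
        have h1 := hSlim k
        rw [h0] at h1
        simpa using h1
      have hqpos : (0:ℝ) < (q k - 1) / 2 := by linarith
      have hrpowS : Tendsto (fun j =>
          (((x (m j - 1) k) ^ 2 + eps (m j - 1) ^ 2) ^ ((q k - 1) / 2))) atTop (𝓝 0) := by
        have hc : ContinuousAt (fun t : ℝ => t ^ ((q k - 1) / 2)) 0 :=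
          Real.continuousAt_rpow_const _ _ (Or.inr hqpos.le)
        have h1 := hc.tendsto.comp hS0
        rwa [Real.zero_rpow (ne_of_gt hqpos)] at h1
      have hepsq : Tendsto (fun j => eps (m j) ^ (q k)) atTop (𝓝 0) := by
        have hc : ContinuousAt (fun t : ℝ => t ^ (q k)) 0 :=
          Real.continuousAt_rpow_const _ _ (Or.inr (by linarith))
        have h1 := hc.tendsto.comp hepsm0
        rwa [Real.zero_rpow (by positivity : q k ≠ 0)] at h1
      have hLHS0 : Tendsto (fun j => lam k * q k * w (m j - 1) k * x (m j) k) atTop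
          (𝓝 0) := by
        apply squeeze_zero_norm (a := fun j => lam k * q k
          * (((x (m j - 1) k) ^ 2 + eps (m j - 1) ^ 2) ^ ((q k - 1) / 2)
              + eps (m j) ^ (q k)))
        · intro j
          rw [Real.norm_eq_abs]
          exact hbound j k
        · have h1 := (tendsto_const_nhds (x := lam k * q k)).mul (hrpowS.add hepsq)
          simpa using h1
      exact tendsto_nhds_unique hRHSlim hLHS0
  exact ⟨hopt, minimality A b lam q hlam hq xbar hopt⟩
end
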